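/- arXiv:cs/0406024 — 9 statements merged into one kernel-verified Lean document; each statement's English description precedes it below -/
import Mathlib

section
/- If a graph G has an improper t-track layout, then G has a (proper) 2t-track layout. -/
open SimpleGraph

/-- A (proper) track layout of the graph `G` with `t` tracks.
`track v` is the track (colour class) of vertex `v`, and `pos v` gives the
position of `v` in the total order of its track. -/
structure TrackLayout (V : Type) (G : SimpleGraph V) (t : ℕ) where
  /-- the track containing each vertex -/
  track : V → Fin t
  /-- the position of each vertex within its track -/
  pos : V → ℕ
  /-- distinct vertices on a common track occupy distinct positions -/
  inj : ∀ v w : V, track v = track w → pos v = pos w → v = w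
  /-- the tracks form a proper vertex colouring -/
  proper : ∀ v w : V, G.Adj v w → track v ≠ track w
  /-- no X-crossing: there are no edges `vw` and `xy` with `v, x` on one track,
  `w, y` on another track, `v <ᵢ x` and `y <ⱼ w` -/
  noX : ∀ v w x y : V, G.Adj v w → G.Adj x y →
    track v = track x → track w = track y → track v ≠ track w →
    pos v < pos x → pos y < pos w → False
/-- An improper track layout of `G` with `t` tracks: adjacent vertices may share a
track, but then they must be consecutive in that track; and there is no X-crossing. -/
structure ImproperTrackLayout (V : Type) (G : SimpleGraph V) (t : ℕ) where
  /-- the track containing each vertex -/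
  track : V → Fin t
  /-- the position of each vertex within its track -/
  pos : V → ℕ
  /-- distinct vertices on a common track occupy distinct positions -/
  inj : ∀ v w : V, track v = track w → pos v = pos w → v = w
  /-- adjacent vertices on a common track are consecutive in that track -/
  consecutive : ∀ v w x : V, G.Adj v w → track v = track w → track x = track v →
    pos v < pos x → pos x < pos w → False
  /-- no X-crossing -/
  noX : ∀ v w x y : V, G.Adj v w → G.Adj x y →
    track v = track x → track w = track y → track v ≠ track w →
    pos v < pos x → pos y < pos w → False


attribute [local instance] Classical.propDecidable Classical.decEq

section
variable {V : Type} [Fintype V] {G : SimpleGraph V} {t : ℕ}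

namespace ImproperTrackLayout

noncomputable def rank (L : ImproperTrackLayout V G t) (v : V) : ℕ :=
  (Finset.univ.filter fun x => L.track x = L.track v ∧ L.pos x < L.pos v).card

lemma rank_lt (L : ImproperTrackLayout V G t) {v w : V}
    (ht : L.track v = L.track w) (hp : L.pos v < L.pos w) : L.rank v < L.rank w := by
  apply Finset.card_lt_card
  constructor
  · intro x hx
    simp only [Finset.mem_filter, Finset.mem_univ, true_and] at hx ⊢
    exact ⟨hx.1.trans ht, hx.2.trans hp⟩
  · intro hsub
    have := hsub (by simp [ht, hp] : v ∈ _)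
    simp at this

lemma rank_succ (L : ImproperTrackLayout V G t) {v w : V} (ha : G.Adj v w)
    (ht : L.track v = L.track w) (hp : L.pos v < L.pos w) : L.rank w = L.rank v + 1 := by
  have hset : (Finset.univ.filter fun x => L.track x = L.track w ∧ L.pos x < L.pos w)
      = insert v (Finset.univ.filter fun x => L.track x = L.track v ∧ L.pos x < L.pos v) := by
    ext x
    simp only [Finset.mem_filter, Finset.mem_univ, true_and, Finset.mem_insert]
    constructor
    · rintro ⟨hx1, hx2⟩
      rcases lt_trichotomy (L.pos x) (L.pos v) with h | h | h
      · exact Or.inr ⟨hx1.trans ht.symm, h⟩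
      · exact Or.inl (L.inj x v (hx1.trans ht.symm) h)
      · exact absurd (L.consecutive v w x ha ht (hx1.trans ht.symm) h hx2) not_false
    · rintro (rfl | ⟨hx1, hx2⟩)
      · exact ⟨ht, hp⟩
      · exact ⟨hx1.trans ht, hx2.trans hp⟩
  rw [ImproperTrackLayout.rank, hset, Finset.card_insert_of_notMem (by simp)]
  rfl

/-- the rank difference of adjacent same-track vertices is one -/
lemma rank_adj (L : ImproperTrackLayout V G t) {v w : V} (ha : G.Adj v w)
    (ht : L.track v = L.track w) : L.rank w = L.rank v + 1 ∨ L.rank v = L.rank w + 1 := by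
  rcases lt_trichotomy (L.pos v) (L.pos w) with h | h | h
  · exact Or.inl (L.rank_succ ha ht h)
  · exact absurd (L.inj v w ht h) ha.ne
  · exact Or.inr (L.rank_succ ha.symm ht.symm h)

end ImproperTrackLayout
end

/-- If a graph `G` has an improper `t`-track layout, then `G` has a
(proper) `2t`-track layout. -/
theorem improper_to_proper_track_layout {V : Type} [Fintype V] (G : SimpleGraph V)
    (t : ℕ) (L : ImproperTrackLayout V G t) :
    Nonempty (TrackLayout V G (2 * t)) := by
  have htlt : ∀ v : V, 2 * (L.track v).val + L.rank v % 2 < 2 * t := by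
    intro v
    have h1 := (L.track v).isLt
    have h2 : L.rank v % 2 < 2 := Nat.mod_lt _ (by norm_num)
    omega
  have key : ∀ v w : V,
      (⟨2 * (L.track v).val + L.rank v % 2, htlt v⟩ : Fin (2 * t))
        = ⟨2 * (L.track w).val + L.rank w % 2, htlt w⟩
      ↔ (L.track v = L.track w ∧ L.rank v % 2 = L.rank w % 2) := by
    intro v w
    rw [Fin.mk.injEq, Fin.ext_iff]
    have h2 : L.rank v % 2 < 2 := Nat.mod_lt _ (by norm_num)
    have h2' : L.rank w % 2 < 2 := Nat.mod_lt _ (by norm_num)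
    omega
  refine ⟨⟨fun v => ⟨2 * (L.track v).val + L.rank v % 2, htlt v⟩,
            L.pos, ?_, ?_, ?_⟩⟩
  · intro v w ht hp
    exact L.inj v w ((key v w).mp ht).1 hp
  · intro v w ha ht
    obtain ⟨ht1, ht2⟩ := (key v w).mp ht
    rcases L.rank_adj ha ht1 with h | h <;> omega
  · intro v w x y havw haxy htvx htwy htvw hpvx hpyw
    obtain ⟨hvx1, hvx2⟩ := (key v x).mp htvx
    obtain ⟨hwy1, hwy2⟩ := (key w y).mp htwy
    by_cases hsame : L.track v = L.track w
    · have hx : L.track x = L.track y := hvx1.symm.trans (hsame.trans hwy1)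
      have r1 : L.rank v < L.rank x := L.rank_lt hvx1 hpvx
      have r2 : L.rank y < L.rank w := L.rank_lt hwy1.symm hpyw
      have r3 := L.rank_adj havw hsame
      have r4 := L.rank_adj haxy hx
      have hne : L.rank v % 2 ≠ L.rank w % 2 := by
        intro h
        exact htvw ((key v w).mpr ⟨hsame, h⟩)
      omega
    · exact L.noX v w x y havw haxy hvx1 hwy1 hsame hpvx hpyw
end

section
/- Let 𝒢 be a class of graphs closed under the addition of ears, where adding an ear to an edge vw of a graph means adding a new vertex adjacent exactly to v and w. If every graph in 𝒢 has an improper t-track layout for some fixed constant t, then every graph in 𝒢 has a (proper) t-track layout. -/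
open SimpleGraph

/-- Adding an ear to the edge `vw` of `G`: the graph on `Option V` obtained from `G`
by adding the new vertex `none`, adjacent exactly to `v` and `w`. -/
def addEar {V : Type} (G : SimpleGraph V) (v w : V) : SimpleGraph (Option V) :=
  SimpleGraph.fromRel (fun a b =>
    (∃ x y : V, a = some x ∧ b = some y ∧ G.Adj x y) ∨
    (a = none ∧ (b = some v ∨ b = some w)))

/-! Add `t` ears to every edge of `G`, take an improper `t`-track layout of the resulting graph
and restrict it to `G`. If an edge `vw` of `G` lay inside one track, its `t` ears would avoid
that track (a triangle cannot lie in a track whose edges join consecutive vertices), so two ears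
would share one of the other `t - 1` tracks and form an X-crossing with `v` and `w`. -/

namespace ImproperTrackLayout

variable {V : Type} {G : SimpleGraph V} {t : ℕ} (L : ImproperTrackLayout V G t)

lemma pos_ne_of_track_eq {v w : V} (htr : L.track v = L.track w) (hne : v ≠ w) :
    L.pos v ≠ L.pos w :=
  fun hpos => hne (L.inj v w htr hpos)

lemma not_between_of_adj {x y z : V} (hxz : G.Adj x z) (hxz' : L.track x = L.track z)
    (hy : L.track y = L.track x)
    (hbetween : L.pos x < L.pos y ∧ L.pos y < L.pos z ∨ L.pos z < L.pos y ∧ L.pos y < L.pos x) :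
    False := by
  rcases hbetween with ⟨h₁, h₂⟩ | ⟨h₁, h₂⟩
  · exact L.consecutive x z y hxz hxz' hy h₁ h₂
  · exact L.consecutive z x y hxz.symm hxz'.symm (hy.trans hxz') h₁ h₂

lemma not_triangle_on_track {a b c : V} (hab : G.Adj a b) (hbc : G.Adj b c) (hac : G.Adj a c)
    (hab' : L.track a = L.track b) (hbc' : L.track b = L.track c) : False := by
  have h₁ := L.pos_ne_of_track_eq hab' hab.ne
  have h₂ := L.pos_ne_of_track_eq hbc' hbc.ne
  have h₃ := L.pos_ne_of_track_eq (hab'.trans hbc') hac.ne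
  have hmiddle :
      (L.pos a < L.pos b ∧ L.pos b < L.pos c ∨ L.pos c < L.pos b ∧ L.pos b < L.pos a) ∨
      (L.pos b < L.pos a ∧ L.pos a < L.pos c ∨ L.pos c < L.pos a ∧ L.pos a < L.pos b) ∨
      (L.pos a < L.pos c ∧ L.pos c < L.pos b ∨ L.pos b < L.pos c ∧ L.pos c < L.pos a) := by
    omega
  rcases hmiddle with h | h | h
  · exact L.not_between_of_adj hac (hab'.trans hbc') hab'.symm h
  · exact L.not_between_of_adj hbc hbc' hab' h
  · exact L.not_between_of_adj hab hab' (hab'.trans hbc').symm h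

lemma not_commonNeighbors_on_track {v w x y : V} (hvw : v ≠ w)
    (hx : x ∈ G.commonNeighbors v w) (hy : y ∈ G.commonNeighbors v w) (hxy : x ≠ y)
    (htr : L.track v = L.track w) (htr' : L.track x = L.track y) (hvx : L.track v ≠ L.track x) :
    False := by
  rw [mem_commonNeighbors] at hx hy
  rcases (L.pos_ne_of_track_eq htr hvw).lt_or_gt with hpvw | hpvw <;>
    rcases (L.pos_ne_of_track_eq htr' hxy).lt_or_gt with hpxy | hpxy
  · exact L.noX v y w x hy.1 hx.2 htr htr'.symm (htr' ▸ hvx) hpvw hpxy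
  · exact L.noX v x w y hx.1 hy.2 htr htr' hvx hpvw hpxy
  · exact L.noX w y v x hy.2 hx.1 htr.symm htr'.symm (htr ▸ htr' ▸ hvx) hpvw hpxy
  · exact L.noX w x v y hx.2 hy.1 htr.symm htr' (htr ▸ hvx) hpvw hpxy

lemma track_ne_of_le_ncard_commonNeighbors [Finite V] {v w : V} (hvw : G.Adj v w)
    (ht : t ≤ (G.commonNeighbors v w).ncard) : L.track v ≠ L.track w := by
  intro htr
  set S := G.commonNeighbors v w
  have hoff : ∀ x ∈ S, L.track x ≠ L.track v := fun x hx hxv => by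
    rw [mem_commonNeighbors] at hx
    exact L.not_triangle_on_track hvw hx.2 hx.1 htr (htr.symm.trans hxv.symm)
  have hnotInj : ¬ Set.InjOn L.track S := by
    intro hinj
    have hsurj : L.track '' S = Set.univ :=
      Set.eq_of_subset_of_ncard_le (Set.subset_univ _)
        (by rwa [Set.ncard_univ, Nat.card_fin, hinj.ncard_image])
    obtain ⟨x, hx, hxv⟩ := hsurj.symm ▸ Set.mem_univ (L.track v)
    exact hoff x hx hxv
  simp only [Set.InjOn, not_forall] at hnotInj
  obtain ⟨x, hx, y, hy, hxy, hne⟩ := hnotInj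
  exact L.not_commonNeighbors_on_track hvw.ne hx hy hne htr hxy (fun h => hoff x hx h.symm)

def comap {W : Type} {H : SimpleGraph W} (f : Copy H G) : ImproperTrackLayout W H t where
  track := L.track ∘ f
  pos := L.pos ∘ f
  inj _ _ htr hpos := f.injective (L.inj _ _ htr hpos)
  consecutive v w x hvw := L.consecutive (f v) (f w) (f x) (f.toHom.map_adj hvw)
  noX v w x y hvw hxy := L.noX (f v) (f w) (f x) (f y) (f.toHom.map_adj hvw) (f.toHom.map_adj hxy)

def toTrackLayout (hproper : ∀ v w, G.Adj v w → L.track v ≠ L.track w) : TrackLayout V G t where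
  track := L.track
  pos := L.pos
  inj := L.inj
  proper := hproper
  noX := L.noX

end ImproperTrackLayout

section Ears

variable {V : Type} (G : SimpleGraph V) (v w : V)

lemma addEar_adj_some {x y : V} : (addEar G v w).Adj (some x) (some y) ↔ G.Adj x y := by
  simp only [addEar, fromRel_adj]
  grind [Adj.ne, Adj.symm]

lemma addEar_adj_none_some {x : V} : (addEar G v w).Adj none (some x) ↔ x = v ∨ x = w := by
  simp [addEar, fromRel_adj]

def addEarCopy : Copy G (addEar G v w) :=
  Hom.toCopy ⟨some, (addEar_adj_some G v w).mpr⟩ (Option.some_injective V)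

lemma image_some_commonNeighbors_subset (a b : V) :
    some '' G.commonNeighbors a b ⊆ (addEar G v w).commonNeighbors (some a) (some b) := by
  rintro _ ⟨x, hx, rfl⟩
  simpa [mem_commonNeighbors, addEar_adj_some] using hx

lemma none_mem_commonNeighbors_addEar :
    none ∈ (addEar G v w).commonNeighbors (some v) (some w) := by
  simp [mem_commonNeighbors, adj_comm _ (some _) none, addEar_adj_none_some]

variable [Finite V]

lemma ncard_commonNeighbors_le_addEar (a b : V) :
    (G.commonNeighbors a b).ncard ≤ ((addEar G v w).commonNeighbors (some a) (some b)).ncard :=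
  calc (G.commonNeighbors a b).ncard
      = (some '' G.commonNeighbors a b).ncard := (Set.ncard_image_of_injective _
          (Option.some_injective V)).symm
    _ ≤ _ := Set.ncard_le_ncard (image_some_commonNeighbors_subset G v w a b)

lemma ncard_commonNeighbors_addEar_self :
    (G.commonNeighbors v w).ncard + 1 ≤
      ((addEar G v w).commonNeighbors (some v) (some w)).ncard :=
  calc (G.commonNeighbors v w).ncard + 1
      = (insert none (some '' G.commonNeighbors v w)).ncard := by
        rw [Set.ncard_insert_of_notMem (by simp),
          Set.ncard_image_of_injective _ (Option.some_injective V)]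
    _ ≤ _ := Set.ncard_le_ncard (Set.insert_subset (none_mem_commonNeighbors_addEar G v w)
          (image_some_commonNeighbors_subset G v w v w))

end Ears

lemma exists_copy_addEars (𝒢 : ∀ (V : Type) [Fintype V], SimpleGraph V → Prop)
    (earClosed : ∀ (V : Type) [Fintype V] (G : SimpleGraph V) (v w : V),
      𝒢 V G → G.Adj v w → 𝒢 (Option V) (addEar G v w))
    {V : Type} [Fintype V] [DecidableEq V] (G : SimpleGraph V) (hG : 𝒢 V G)
    (M : Multiset (V × V)) (hM : ∀ p ∈ M, G.Adj p.1 p.2) :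
    ∃ (W : Type) (_ : Fintype W) (H : SimpleGraph W) (f : Copy G H), 𝒢 W H ∧
      ∀ p : V × V, M.count p ≤ (H.commonNeighbors (f p.1) (f p.2)).ncard := by
  induction M using Multiset.induction_on with
  | empty => exact ⟨V, inferInstance, G, Copy.id G, hG, fun _ => by simp⟩
  | cons q M ih =>
    obtain ⟨W, _, H, f, hH, hcount⟩ := ih fun p hp => hM p (Multiset.mem_cons_of_mem hp)
    have hq : H.Adj (f q.1) (f q.2) := f.toHom.map_adj (hM q (Multiset.mem_cons_self q M))
    refine ⟨Option W, inferInstance, _, (addEarCopy H _ _).comp f, earClosed W H _ _ hH hq,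
      fun p => ?_⟩
    rw [Multiset.count_cons, Copy.comp_apply, Copy.comp_apply]
    split_ifs with hpq
    · subst hpq
      exact (Nat.add_le_add_right (hcount p) 1).trans (ncard_commonNeighbors_addEar_self H _ _)
    · rw [add_zero]
      exact (hcount p).trans (ncard_commonNeighbors_le_addEar H _ _ _ _)

/-- Let `𝒢` be a class of (finite) graphs closed under the addition
of ears. If every graph in `𝒢` has an improper `t`-track layout, for a fixed constant
`t`, then every graph in `𝒢` has a (proper) `t`-track layout. -/
theorem ear_closed_improper_to_proper (t : ℕ)
    (𝒢 : ∀ (V : Type) [Fintype V], SimpleGraph V → Prop)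
    (earClosed : ∀ (V : Type) [Fintype V] (G : SimpleGraph V) (v w : V),
      𝒢 V G → G.Adj v w → 𝒢 (Option V) (addEar G v w))
    (improper : ∀ (V : Type) [Fintype V] (G : SimpleGraph V),
      𝒢 V G → Nonempty (ImproperTrackLayout V G t)) :
    ∀ (V : Type) [Fintype V] (G : SimpleGraph V),
      𝒢 V G → Nonempty (TrackLayout V G t) := by
  intro V _ G hG
  classical
  obtain ⟨W, _, H, f, hH, hears⟩ := exists_copy_addEars 𝒢 earClosed G hG
    (t • (Finset.univ.filter fun p : V × V => G.Adj p.1 p.2).val)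
    (by simp [Multiset.mem_nsmul])
  obtain ⟨L⟩ := improper W H hH
  refine ⟨(L.comap f).toTrackLayout fun v w hvw => ?_⟩
  refine L.track_ne_of_le_ncard_commonNeighbors (f.toHom.map_adj hvw) ?_
  have hcount := hears (v, w)
  rwa [Multiset.count_nsmul, Multiset.count_eq_one_of_mem (Finset.nodup _) (by simpa using hvw),
    mul_one] at hcount
end

section
/- Every tree (more generally, every forest) has a 3-track layout; hence every tree has track-number at most 3. -/
open SimpleGraph

/-- The track-number of `G`: the minimum `t` such that `G` has a `t`-track layout. -/
noncomputable def trackNumber (V : Type) (G : SimpleGraph V) : ℕ :=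
  sInf {t : ℕ | Nonempty (TrackLayout V G t)}

set_option linter.unusedSectionVars false

namespace ForestTrack

variable {V : Type}

section WithFintype
variable [Fintype V]

noncomputable def NN (V : Type) [Fintype V] : ℕ := Fintype.card V + 2

noncomputable def iot (v : V) : ℕ := (Fintype.equivFin V v : ℕ)

lemma iot_lt (v : V) : iot v < NN V := by
  have := (Fintype.equivFin V v).isLt
  simp only [NN, iot]; omega

lemma NN_ge : 2 ≤ NN V := by simp [NN]

lemma iot_inj {v w : V} (h : iot v = iot w) : v = w :=
  (Fintype.equivFin V).injective (Fin.ext h)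

end WithFintype

noncomputable def rep (G : SimpleGraph V) (v : V) : V := (G.connectedComponentMk v).out

lemma rep_reachable (G : SimpleGraph V) (v : V) : G.Reachable (rep G v) v :=
  (SimpleGraph.ConnectedComponent.eq).mp (Quot.out_eq _)

lemma rep_adj {G : SimpleGraph V} {v w : V} (h : G.Adj v w) : rep G v = rep G w := by
  unfold rep
  rw [SimpleGraph.ConnectedComponent.sound h.reachable]

noncomputable def depth (G : SimpleGraph V) (v : V) : ℕ := G.dist (rep G v) v

/-- H1: predecessor existence (no acyclicity needed). -/
lemma exists_pred {G : SimpleGraph V} {v : V} (h : depth G v ≠ 0) :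
    ∃ u, G.Adj u v ∧ depth G u + 1 = depth G v := by
  classical
  obtain ⟨p, hp, hl⟩ := (rep_reachable G v).exists_path_of_dist
  have hlen : p.length = depth G v := hl
  have hpos : 0 < p.length := by omega
  have hadj : G.Adj (p.getVert (p.length - 1)) v := by
    have := p.adj_getVert_succ (i := p.length - 1) (by omega)
    rwa [show p.length - 1 + 1 = p.length by omega, p.getVert_length] at this
  set u := p.getVert (p.length - 1) with hu
  have hrepu : rep G u = rep G v := rep_adj hadj
  have hmem : u ∈ p.support := by
    rw [Walk.mem_support_iff_exists_getVert]
    exact ⟨p.length - 1, rfl, by omega⟩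
  have hne : u ≠ v := hadj.ne
  have htake : (p.takeUntil u hmem).length + (p.dropUntil u hmem).length = p.length := by
    have hsp := p.take_spec hmem
    calc (p.takeUntil u hmem).length + (p.dropUntil u hmem).length
        = ((p.takeUntil u hmem).append (p.dropUntil u hmem)).length := by
          rw [Walk.length_append]
      _ = p.length := by rw [hsp]
  have hdrop : (p.dropUntil u hmem).length ≠ 0 := fun h0 => hne (Walk.eq_of_length_eq_zero h0)
  have hdu : G.dist (rep G v) u ≤ p.length - 1 := by
    have := G.dist_le (p.takeUntil u hmem)
    omega
  have hdv : G.dist (rep G v) v ≤ G.dist (rep G v) u + 1 := by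
    obtain ⟨q, hq, hql⟩ := (rep_reachable G u).exists_path_of_dist
    have := G.dist_le ((q.copy (by rw [hrepu]) rfl).concat hadj)
    rw [Walk.length_concat, Walk.length_copy] at this
    have hql2 : q.length = G.dist (rep G v) u := by rw [hql, hrepu]
    omega
  refine ⟨u, hadj, ?_⟩
  have hduv : depth G u = G.dist (rep G v) u := by rw [depth, hrepu]
  have hdvv : G.dist (rep G v) v = depth G v := rfl
  rw [hduv]
  omega

lemma takeUntil_length_lt {G : SimpleGraph V} [DecidableEq V] {r v w : V} (p : G.Walk r v)
    (hmem : w ∈ p.support) (hne : w ≠ v) : (p.takeUntil w hmem).length < p.length := by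
  have hsp := p.take_spec hmem
  have hlen : (p.takeUntil w hmem).length + (p.dropUntil w hmem).length = p.length := by
    calc (p.takeUntil w hmem).length + (p.dropUntil w hmem).length
        = ((p.takeUntil w hmem).append (p.dropUntil w hmem)).length := by
          rw [Walk.length_append]
      _ = p.length := by rw [hsp]
  have hdrop : (p.dropUntil w hmem).length ≠ 0 := fun h0 => hne (Walk.eq_of_length_eq_zero h0)
  omega

lemma concat_isPath {G : SimpleGraph V} {r v w : V} {p : G.Walk r v} (hp : p.IsPath)
    (h : G.Adj v w) (hw : w ∉ p.support) : (p.concat h).IsPath := by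
  rw [← Walk.isPath_reverse_iff, Walk.reverse_concat]
  refine Walk.IsPath.cons ((Walk.isPath_reverse_iff p).mpr hp) ?_
  rw [Walk.support_reverse, List.mem_reverse]
  exact hw

/-- adjacent vertices have depths differing by exactly one (needs acyclicity). -/
lemma depth_adj {G : SimpleGraph V} (hG : G.IsAcyclic) {v w : V} (h : G.Adj v w) :
    depth G w = depth G v + 1 ∨ depth G v = depth G w + 1 := by
  classical
  have hrep : rep G v = rep G w := rep_adj h
  -- triangle bounds
  have tri : ∀ (a b : V), G.Adj a b → depth G b ≤ depth G a + 1 := by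
    intro a b hab
    obtain ⟨p, hp, hl⟩ := (rep_reachable G a).exists_path_of_dist
    have := G.dist_le (p.concat hab)
    rw [Walk.length_concat] at this
    have hb : depth G b = G.dist (rep G a) b := by rw [depth, rep_adj hab]
    rw [hb]
    have hda : depth G a = G.dist (rep G a) a := rfl
    omega
  have t1 := tri v w h
  have t2 := tri w v h.symm
  -- exclude equality
  by_cases heq : depth G v = depth G w
  · exfalso
    obtain ⟨p, hp, hl⟩ := (rep_reachable G v).exists_path_of_dist
    obtain ⟨q, hq, hql⟩ := (rep_reachable G w).exists_path_of_dist
    have hwns : w ∉ p.support := by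
      intro hmem
      have h1 : G.dist (rep G v) w ≤ (p.takeUntil w hmem).length :=
        G.dist_le _
      have h2 : (p.takeUntil w hmem).length < p.length :=
        takeUntil_length_lt p hmem h.ne'
      have h3 : G.dist (rep G v) w = depth G w := by rw [depth, hrep]
      have h4 : p.length = depth G v := hl
      omega
    have hW : (p.concat h).IsPath := concat_isPath hp h hwns
    have hQ : (q.copy hrep.symm rfl).IsPath := (Walk.isPath_copy _ _ _).mpr hq
    have hique := hG.path_unique ⟨p.concat h, hW⟩ ⟨q.copy hrep.symm rfl, hQ⟩
    have hlq : (p.concat h).length = (q.copy hrep.symm rfl).length := by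
      rw [Subtype.mk.injEq] at hique
      rw [hique]
    rw [Walk.length_concat, Walk.length_copy] at hlq
    have h4 : p.length = depth G v := hl
    have h5 : q.length = depth G w := hql
    omega
  · omega

/-- uniqueness of the lower-depth neighbour (needs acyclicity). -/
lemma pred_unique {G : SimpleGraph V} (hG : G.IsAcyclic) {u u' v : V}
    (h : G.Adj u v) (h' : G.Adj u' v)
    (hd : depth G u + 1 = depth G v) (hd' : depth G u' + 1 = depth G v) : u = u' := by
  classical
  have hrep : rep G u = rep G v := rep_adj h
  have hrep' : rep G u' = rep G v := rep_adj h'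
  obtain ⟨p, hp, hl⟩ := (rep_reachable G u).exists_path_of_dist
  obtain ⟨q, hq, hql⟩ := (rep_reachable G u').exists_path_of_dist
  have key : ∀ (a : V) (ha : G.Adj a v) (hda : depth G a + 1 = depth G v)
      (r : G.Walk (rep G v) a), r.IsPath → r.length = depth G a → v ∉ r.support := by
    intro a ha hda r hr hrl hmem
    have h1 : G.dist (rep G v) v ≤ (r.takeUntil v hmem).length := G.dist_le _
    have h2 : (r.takeUntil v hmem).length ≤ r.length := Walk.length_takeUntil_le r hmem
    have h3 : G.dist (rep G v) v = depth G v := rfl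
    omega
  have hvp : v ∉ (p.copy hrep rfl).support := by
    apply key u h hd
    · exact (Walk.isPath_copy _ _ _).mpr hp
    · rw [Walk.length_copy]; rw [hl, depth, hrep]
  have hvq : v ∉ (q.copy hrep' rfl).support := by
    apply key u' h' hd'
    · exact (Walk.isPath_copy _ _ _).mpr hq
    · rw [Walk.length_copy]; rw [hql, depth, hrep']
  have hW : ((p.copy hrep rfl).concat h).IsPath :=
    concat_isPath ((Walk.isPath_copy _ _ _).mpr hp) h hvp
  have hW' : ((q.copy hrep' rfl).concat h').IsPath :=
    concat_isPath ((Walk.isPath_copy _ _ _).mpr hq) h' hvq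
  have hique := hG.path_unique ⟨_, hW⟩ ⟨_, hW'⟩
  rw [Subtype.mk.injEq] at hique
  obtain ⟨hv, -⟩ := Walk.concat_inj hique
  exact hv

open scoped Classical in
noncomputable def parent (G : SimpleGraph V) (v : V) : V :=
  if h : ∃ u, G.Adj u v ∧ depth G u + 1 = depth G v then h.choose else v

lemma parent_spec {G : SimpleGraph V} {v : V} (h : depth G v ≠ 0) :
    G.Adj (parent G v) v ∧ depth G (parent G v) + 1 = depth G v := by
  have he := exists_pred h
  classical
  rw [parent, dif_pos he]
  exact he.choose_spec

lemma parent_eq {G : SimpleGraph V} (hG : G.IsAcyclic) {u v : V} (h : G.Adj u v)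
    (hd : depth G u + 1 = depth G v) : parent G v = u := by
  have h0 : depth G v ≠ 0 := by omega
  exact pred_unique hG (parent_spec h0).1 h (parent_spec h0).2 hd

section WithFintype
variable [Fintype V]

noncomputable def key (G : SimpleGraph V) (v : V) : ℕ :=
  if h : depth G v = 0 then iot v
  else key G (parent G v) * NN V + iot v
termination_by depth G v
decreasing_by
  have := (parent_spec h).2
  omega

lemma key_mod (G : SimpleGraph V) (v : V) : key G v % NN V = iot v := by
  rw [key]
  split
  · exact Nat.mod_eq_of_lt (iot_lt v)
  · rw [Nat.mul_comm, Nat.mul_add_mod]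
    exact Nat.mod_eq_of_lt (iot_lt v)

lemma key_inj {G : SimpleGraph V} {v w : V} (h : key G v = key G w) : v = w := by
  apply iot_inj
  rw [← key_mod G v, ← key_mod G w, h]

lemma key_lt (G : SimpleGraph V) (v : V) : key G v < NN V ^ (depth G v + 1) := by
  have main : ∀ n (v : V), depth G v ≤ n → key G v < NN V ^ (depth G v + 1) := by
    intro n
    induction n with
    | zero =>
      intro v hv
      have h0 : depth G v = 0 := by omega
      rw [key, dif_pos h0, h0, pow_one]
      exact iot_lt v
    | succ n ih =>
      intro v hv
      by_cases h0 : depth G v = 0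
      · rw [key, dif_pos h0, h0, pow_one]
        exact iot_lt v
      · rw [key, dif_neg h0]
        have hspec := (parent_spec h0).2
        have hp := ih (parent G v) (by omega)
        have h1 : key G (parent G v) + 1 ≤ NN V ^ (depth G (parent G v) + 1) := hp
        have h2 : (key G (parent G v) + 1) * NN V ≤
            NN V ^ (depth G (parent G v) + 1) * NN V :=
          Nat.mul_le_mul_right _ h1
        have h3 : NN V ^ (depth G (parent G v) + 1) * NN V = NN V ^ (depth G v + 1) := by
          rw [← pow_succ, ← hspec]
        have h4 := iot_lt (v := v)
        have h5 : (key G (parent G v) + 1) * NN V = key G (parent G v) * NN V + NN V := by ring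
        omega
  exact main (depth G v) v le_rfl

lemma digit_lt {N a b s t : ℕ} (hs : s < N) (h : a < b) : a * N + s < b * N + t := by
  have h2 : (a + 1) * N ≤ b * N := Nat.mul_le_mul_right N h
  have e : (a + 1) * N = a * N + N := Nat.succ_mul a N
  omega

lemma digit_le {N a b s t : ℕ} (hs : s < N) (ht : t < N) (h : a * N + s < b * N + t) :
    a ≤ b := by
  by_contra hc
  have := digit_lt (N := N) (a := b) (b := a) (s := t) (t := s) ht (by omega)
  omega

noncomputable def posn (G : SimpleGraph V) (v : V) : ℕ :=
  NN V ^ (depth G v + 1) + key G v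

lemma posn_mono {G : SimpleGraph V} {v w : V} (h : depth G v < depth G w) :
    posn G v < posn G w := by
  have h1 := key_lt G v
  have h2 : NN V ^ (depth G v + 1) + NN V ^ (depth G v + 1) ≤ NN V ^ (depth G v + 2) := by
    have : NN V ^ (depth G v + 2) = NN V ^ (depth G v + 1) * NN V := by ring
    have hN : 2 ≤ NN V := NN_ge
    have := Nat.mul_le_mul_left (NN V ^ (depth G v + 1)) hN
    omega
  have h3 : NN V ^ (depth G v + 2) ≤ NN V ^ (depth G w + 1) :=
    Nat.pow_le_pow_right (by have := NN_ge (V := V); omega) (by omega)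
  have h4 : NN V ^ (depth G w + 1) ≤ posn G w := Nat.le_add_right _ _
  have h5 : posn G v < NN V ^ (depth G v + 2) := by
    rw [posn] at *
    omega
  omega

lemma depth_le_of_posn_lt {G : SimpleGraph V} {v w : V} (h : posn G v < posn G w) :
    depth G v ≤ depth G w := by
  by_contra hc
  have := posn_mono (G := G) (v := w) (w := v) (by omega)
  omega

lemma posn_lt_iff_key_lt {G : SimpleGraph V} {v w : V} (h : depth G v = depth G w) :
    (posn G v < posn G w ↔ key G v < key G w) := by
  rw [posn, posn, h]
  omega

lemma posn_inj {G : SimpleGraph V} {v w : V} (h : posn G v = posn G w) : v = w := by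
  have hd : depth G v = depth G w := by
    by_contra hc
    rcases Nat.lt_or_ge (depth G v) (depth G w) with h1 | h1
    · have := posn_mono (G := G) h1
      omega
    · have h2 : depth G w < depth G v := by omega
      have := posn_mono (G := G) h2
      omega
  apply key_inj (G := G)
  rw [posn, posn, hd] at h
  omega

lemma key_child {G : SimpleGraph V} {v : V} (h : depth G v ≠ 0) :
    key G v = key G (parent G v) * NN V + iot v := by
  conv_lhs => rw [key]
  rw [dif_neg h]

end WithFintype

end ForestTrack

open ForestTrack in
theorem forest_three_track_layout' {V : Type} [Fintype V] (G : SimpleGraph V)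
    (hG : G.IsAcyclic) :
    Nonempty (TrackLayout V G 3) ∧ trackNumber V G ≤ 3 := by
  classical
  have layout : TrackLayout V G 3 :=
    { track := fun v => ⟨depth G v % 3, Nat.mod_lt _ (by norm_num)⟩
      pos := fun v => posn G v
      inj := fun v w _ hp => posn_inj hp
      proper := by
        intro v w h hc
        have hmod : depth G v % 3 = depth G w % 3 := congrArg Fin.val hc
        have hd := depth_adj hG h
        omega
      noX := by
        intro v w x y hvw hxy hvx hwy _ hpvx hpyw
        have dvx : depth G v % 3 = depth G x % 3 := congrArg Fin.val hvx
        have dwy : depth G w % 3 = depth G y % 3 := congrArg Fin.val hwy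
        have hdv := depth_adj hG hvw
        have hdx := depth_adj hG hxy
        have h1 : depth G v ≤ depth G x := depth_le_of_posn_lt hpvx
        have h2 : depth G y ≤ depth G w := depth_le_of_posn_lt hpyw
        rcases Nat.lt_or_ge (depth G v) (depth G x) with hlt | hge
        · have hwy' : depth G w < depth G y := by omega
          have := posn_mono (G := G) hwy'
          omega
        · have hdeq : depth G v = depth G x := by omega
          rcases hdv with hdv | hdv <;> rcases hdx with hdx | hdx
          · -- both children
            have hpw : parent G w = v := parent_eq hG hvw (by omega)
            have hpy : parent G y = x := parent_eq hG hxy (by omega)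
            have hkvx : key G v < key G x := (posn_lt_iff_key_lt hdeq).mp hpvx
            have hkw : key G w = key G v * NN V + iot w := by
              rw [key_child (by omega), hpw]
            have hky : key G y = key G x * NN V + iot y := by
              rw [key_child (by omega), hpy]
            have hlt2 : key G w < key G y := by
              rw [hkw, hky]; exact digit_lt (iot_lt w) hkvx
            have hd2 : depth G w = depth G y := by omega
            have := (posn_lt_iff_key_lt hd2).mpr hlt2
            omega
          · omega
          · omega
          · -- both parents
            have hpv : parent G v = w := parent_eq hG hvw.symm (by omega)
            have hpx : parent G x = y := parent_eq hG hxy.symm (by omega)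
            have hkvx : key G v < key G x := (posn_lt_iff_key_lt hdeq).mp hpvx
            have hkv : key G v = key G w * NN V + iot v := by
              rw [key_child (by omega), hpv]
            have hkx : key G x = key G y * NN V + iot x := by
              rw [key_child (by omega), hpx]
            have hle : key G w ≤ key G y := by
              rw [hkv, hkx] at hkvx
              exact digit_le (iot_lt v) (iot_lt x) hkvx
            have hd2 : depth G y = depth G w := by omega
            have := (posn_lt_iff_key_lt hd2).mp hpyw
            omega }
  exact ⟨⟨layout⟩, Nat.sInf_le ⟨layout⟩⟩


/-- Every tree (more generally, every forest) has a `3`-track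
layout; hence every tree has track-number at most `3`. -/
theorem forest_three_track_layout {V : Type} [Fintype V] (G : SimpleGraph V)
    (hG : G.IsAcyclic) :
    Nonempty (TrackLayout V G 3) ∧ trackNumber V G ≤ 3 := by
  exact forest_three_track_layout' G hG
end

section
/- Every graph G with path-width pw(G) has track-number tn(G) ≤ pw(G) + 1. -/
open SimpleGraph

/-- A path-decomposition of `G`: a sequence of bags `bag 0, …, bag (m-1)` covering
all vertices and all edges, such that the bags containing any given vertex are
consecutive. -/
structure PathDecomp (V : Type) (G : SimpleGraph V) where
  /-- the number of bags -/
  m : ℕ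
  /-- the bags -/
  bag : Fin m → Set V
  cover : ∀ v : V, ∃ i, v ∈ bag i
  edgeCover : ∀ v w : V, G.Adj v w → ∃ i, v ∈ bag i ∧ w ∈ bag i
  interval : ∀ (v : V) (i j k : Fin m), i ≤ j → j ≤ k →
    v ∈ bag i → v ∈ bag k → v ∈ bag j

/-- The path-width of `G`: the minimum width (one less than the maximum bag size)
of a path-decomposition of `G`. -/
noncomputable def pathwidth (V : Type) (G : SimpleGraph V) : ℕ :=
  sInf {k : ℕ | ∃ D : PathDecomp V G, ∀ i, (D.bag i).ncard ≤ k + 1}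

set_option linter.unusedSectionVars false

section Aux
variable {V : Type} [Fintype V] {G : SimpleGraph V}

noncomputable def firstBag (D : PathDecomp V G) (v : V) : ℕ :=
  sInf {i : ℕ | ∃ h : i < D.m, v ∈ D.bag ⟨i, h⟩}

lemma firstBag_spec (D : PathDecomp V G) (v : V) :
    ∃ h : firstBag D v < D.m, v ∈ D.bag ⟨firstBag D v, h⟩ := by
  obtain ⟨i, hi⟩ := D.cover v
  have hne : {i : ℕ | ∃ h : i < D.m, v ∈ D.bag ⟨i, h⟩}.Nonempty :=
    ⟨i.1, i.2, by simpa using hi⟩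
  exact Nat.sInf_mem hne

lemma firstBag_le (D : PathDecomp V G) (v : V) (i : Fin D.m) (h : v ∈ D.bag i) :
    firstBag D v ≤ (i : ℕ) :=
  Nat.sInf_le ⟨i.2, by simpa using h⟩

lemma mem_bag_between (D : PathDecomp V G) {v : V} {i : Fin D.m}
    (hv : v ∈ D.bag i) (j : Fin D.m) (h1 : firstBag D v ≤ (j : ℕ))
    (h2 : (j : ℕ) ≤ (i : ℕ)) : v ∈ D.bag j := by
  obtain ⟨hm, hmem⟩ := firstBag_spec D v
  exact D.interval v ⟨firstBag D v, hm⟩ j i (Fin.le_def.mpr h1)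
    (Fin.le_def.mpr h2) hmem hv

noncomputable def key (D : PathDecomp V G) (v : V) : ℕ :=
  firstBag D v * Fintype.card V + (Fintype.equivFin V v : ℕ)

lemma key_lt_key (D : PathDecomp V G) {u v : V}
    (h : firstBag D u < firstBag D v) : key D u < key D v := by
  have h1 : (Fintype.equivFin V u : ℕ) < Fintype.card V := (Fintype.equivFin V u).2
  have h2 : (firstBag D u + 1) * Fintype.card V ≤ firstBag D v * Fintype.card V :=
    Nat.mul_le_mul_right _ h
  have h3 : (firstBag D u + 1) * Fintype.card V
      = firstBag D u * Fintype.card V + Fintype.card V := by ring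
  unfold key
  omega

lemma fb_le_of_key_le (D : PathDecomp V G) {u v : V}
    (h : key D u ≤ key D v) : firstBag D u ≤ firstBag D v := by
  by_contra hlt
  push_neg at hlt
  exact absurd h (not_le.mpr (key_lt_key D hlt))

lemma key_inj (D : PathDecomp V G) {u v : V} (h : key D u = key D v) : u = v := by
  have hfb : firstBag D u = firstBag D v :=
    le_antisymm (fb_le_of_key_le D h.le) (fb_le_of_key_le D h.ge)
  have : (Fintype.equivFin V u : ℕ) = (Fintype.equivFin V v : ℕ) := by
    unfold key at h; rw [hfb] at h; omega
  exact (Fintype.equivFin V).injective (Fin.ext this)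

lemma exists_colouring (D : PathDecomp V G) (k : ℕ)
    (hcard : ∀ i, (D.bag i).ncard ≤ k + 1) (s : Finset V) :
    ∃ c : V → Fin (k + 1), ∀ u ∈ s, ∀ w ∈ s, u ≠ w →
      (∃ i, u ∈ D.bag i ∧ w ∈ D.bag i) → c u ≠ c w := by
  classical
  induction s using Finset.strongInduction with
  | _ s ih =>
    rcases s.eq_empty_or_nonempty with rfl | hne
    · exact ⟨fun _ => 0, by simp⟩
    · obtain ⟨v, hvs, hmax⟩ := s.exists_max_image (key D) hne
      obtain ⟨c, hc⟩ := ih (s.erase v) (Finset.erase_ssubset hvs)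
      obtain ⟨hfb, hvbag⟩ := firstBag_spec D v
      set B : Fin D.m := ⟨firstBag D v, hfb⟩ with hB
      set t : Finset V := (s.erase v).filter (fun u => u ∈ D.bag B) with ht
      have hvt : v ∉ t := by simp [ht]
      have htcard : t.card ≤ k := by
        have hsub : ↑(insert v t) ⊆ D.bag B := by
          intro x hx
          simp only [Finset.coe_insert, Set.mem_insert_iff] at hx
          rcases hx with rfl | hx
          · exact hvbag
          · rw [ht] at hx; exact (Finset.mem_filter.1 hx).2
        have h1 : (insert v t).card ≤ k + 1 := by
          calc (insert v t).card = (↑(insert v t) : Set V).ncard :=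
                (Set.ncard_coe_finset _).symm
            _ ≤ (D.bag B).ncard := Set.ncard_le_ncard hsub (Set.toFinite _)
            _ ≤ k + 1 := hcard B
        rw [Finset.card_insert_of_notMem hvt] at h1
        omega
      have hcompl : ((t.image c)ᶜ : Finset (Fin (k + 1))).Nonempty := by
        rw [← Finset.card_pos, Finset.card_compl]
        have him := Finset.card_image_le (s := t) (f := c)
        simp only [Fintype.card_fin]
        omega
      obtain ⟨a, ha⟩ := hcompl
      rw [Finset.mem_compl] at ha
      refine ⟨Function.update c v a, ?_⟩
      have hmem : ∀ w ∈ s, w ≠ v → (∃ i, w ∈ D.bag i ∧ v ∈ D.bag i) → w ∈ t := by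
        rintro w hw hwv ⟨i, hwi, hvi⟩
        have hk : key D w < key D v :=
          lt_of_le_of_ne (hmax w hw) (fun h => hwv (key_inj D h))
        have hfb' : firstBag D w ≤ firstBag D v := fb_le_of_key_le D hk.le
        have hwB : w ∈ D.bag B :=
          mem_bag_between D hwi B hfb' (firstBag_le D v i hvi)
        exact Finset.mem_filter.2 ⟨Finset.mem_erase.2 ⟨hwv, hw⟩, hwB⟩
      intro u hu w hw huw hshare
      by_cases hu' : u = v
      · by_cases hw' : w = v
        · exact absurd (hu'.trans hw'.symm) huw
        · obtain ⟨i, hui, hwi⟩ := hshare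
          have hwt : w ∈ t := hmem w hw hw' ⟨i, hwi, hu' ▸ hui⟩
          rw [hu', Function.update_self, Function.update_of_ne hw']
          intro h
          apply ha
          rw [h]
          exact Finset.mem_image_of_mem c hwt
      · by_cases hw' : w = v
        · obtain ⟨i, hui, hwi⟩ := hshare
          have hut : u ∈ t := hmem u hu hu' ⟨i, hui, hw' ▸ hwi⟩
          rw [hw', Function.update_of_ne hu', Function.update_self]
          intro h
          apply ha
          rw [← h]
          exact Finset.mem_image_of_mem c hut
        · rw [Function.update_of_ne hu', Function.update_of_ne hw']
          exact hc u (Finset.mem_erase.2 ⟨hu', hu⟩) w (Finset.mem_erase.2 ⟨hw', hw⟩)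
            huw hshare

end Aux


/-- Every graph `G` with path-width `pw(G)` has track-number
`tn(G) ≤ pw(G) + 1`. -/
theorem trackNumber_le_pathwidth_succ {V : Type} [Fintype V] (G : SimpleGraph V) :
    trackNumber V G ≤ pathwidth V G + 1 := by
  classical
  have hne : {k : ℕ | ∃ D : PathDecomp V G, ∀ i, (D.bag i).ncard ≤ k + 1}.Nonempty := by
    refine ⟨Fintype.card V,
      ⟨⟨1, fun _ => Set.univ, fun v => ⟨0, trivial⟩,
        fun v w _ => ⟨0, trivial, trivial⟩,
        fun _ _ _ _ _ _ _ _ => trivial⟩, ?_⟩⟩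
    intro i
    simp only [Set.ncard_univ, Nat.card_eq_fintype_card]
    omega
  obtain ⟨D, hD⟩ : ∃ D : PathDecomp V G, ∀ i, (D.bag i).ncard ≤ pathwidth V G + 1 :=
    Nat.sInf_mem hne
  set k := pathwidth V G with hk
  obtain ⟨c, hc⟩ := exists_colouring D k hD Finset.univ
  have hc' : ∀ u w : V, u ≠ w → (∃ i, u ∈ D.bag i ∧ w ∈ D.bag i) → c u ≠ c w :=
    fun u w h hs => hc u (Finset.mem_univ u) w (Finset.mem_univ w) h hs
  have layout : TrackLayout V G (k + 1) := by
    refine ⟨c, firstBag D, ?_, ?_, ?_⟩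
    · intro v w htr hpos
      by_contra hvw
      obtain ⟨hv, hvbag⟩ := firstBag_spec D v
      obtain ⟨hw, hwbag⟩ := firstBag_spec D w
      have heq : (⟨firstBag D v, hv⟩ : Fin D.m) = ⟨firstBag D w, hw⟩ := Fin.ext hpos
      exact hc' v w hvw ⟨⟨firstBag D v, hv⟩, hvbag, heq ▸ hwbag⟩ htr
    · intro v w hadj
      obtain ⟨i, hvi, hwi⟩ := D.edgeCover v w hadj
      exact hc' v w (G.ne_of_adj hadj) ⟨i, hvi, hwi⟩
    · intro v w x y hvw hxy htvx htwy htvw hpvx hpyw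
      obtain ⟨i, hvi, hwi⟩ := D.edgeCover v w hvw
      obtain ⟨j, hxj, hyj⟩ := D.edgeCover x y hxy
      rcases le_total (i : ℕ) (j : ℕ) with hij | hij
      · -- w and y both in bag i
        have hfbw : firstBag D w ≤ (i : ℕ) := firstBag_le D w i hwi
        have hyI : y ∈ D.bag i := mem_bag_between D hyj i (by omega) hij
        have hwy : w ≠ y := fun h => by rw [h] at hpyw; omega
        exact hc' w y hwy ⟨i, hwi, hyI⟩ htwy
      · -- v and x both in bag j
        have hfbx : firstBag D x ≤ (j : ℕ) := firstBag_le D x j hxj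
        have hvJ : v ∈ D.bag j := mem_bag_between D hvi j (by omega) hij
        have hvx : v ≠ x := fun h => by rw [h] at hpvx; omega
        exact hc' v x hvx ⟨j, hvJ, hxj⟩ htvx
  exact Nat.sInf_le ⟨layout⟩
end

section
/- Every graph G with tree-partition-width tpw(G) has track-number tn(G) ≤ 3·tpw(G). -/
open SimpleGraph

/-- A tree-partition of `G`: a (finite) tree together with a partition of `V` into
bags indexed by the nodes of the tree, such that every edge of `G` is either inside
a single bag or between two bags whose nodes are adjacent in the tree. -/
structure TreePartition (V : Type) (G : SimpleGraph V) where
  /-- the index type of the nodes of the tree -/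
  ι : Type
  finι : Fintype ι
  /-- the tree -/
  tree : SimpleGraph ι
  isTree : tree.IsTree
  /-- the bags -/
  bag : ι → Set V
  partition : ∀ v : V, ∃! x : ι, v ∈ bag x
  edgeOK : ∀ v w : V, G.Adj v w →
    (∃ x : ι, v ∈ bag x ∧ w ∈ bag x) ∨
    (∃ x y : ι, tree.Adj x y ∧ v ∈ bag x ∧ w ∈ bag y)

/-- The tree-partition-width of `G`: the minimum, over all tree-partitions of `G`,
of the maximum bag size. -/
noncomputable def treePartitionWidth (V : Type) (G : SimpleGraph V) : ℕ :=
  sInf {w : ℕ | ∃ P : TreePartition V G, ∀ x : P.ι, (P.bag x).ncard ≤ w}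

/-!
Root the tree of a tree-partition and number its nodes in breadth-first order: depths change by
exactly one along tree edges, and children are ordered like their parents. Put a vertex `v` of
bag `x` on the track indexed by (depth of `x` mod 3, index of `v` inside its bag), at the position
given by the number of `x`. Two edges inside bags cannot cross, as each joins two equal positions;
an edge inside a bag keeps the depth mod 3 while an edge between bags changes it, so these never
share a pair of tracks; two edges between bags that cross must join the same two layers, and
there the parent-child order of a BFS numbering rules the crossing out.
-/

namespace SimpleGraph

variable {ι : Type*}

structure IsBFSNumbering (T : SimpleGraph ι) (r : ι) (f : ι → ℕ) : Prop where
  injective : Function.Injective f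
  lt_of_dist_lt {a b : ι} : T.dist r a < T.dist r b → f a < f b
  lt_of_parent_lt {a a' b b' : ι} : T.Adj a a' → T.Adj b b' →
    T.dist r a' = T.dist r a + 1 → T.dist r b' = T.dist r b + 1 → f a < f b → f a' < f b'

variable {T : SimpleGraph ι}

namespace IsTree

lemma dist_mod_three_ne_of_adj (hT : T.IsTree) (r : ι) {a b : ι} (h : T.Adj a b) :
    T.dist r a % 3 ≠ T.dist r b % 3 := by
  rcases hT.dist_eq_dist_add_one_of_adj r h with h | h <;> omega

variable (hT : T.IsTree) (r : ι)

noncomputable def pathToRoot (x : ι) : T.Walk x r :=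
  (hT.connected.exists_path_of_dist x r).choose

lemma isPath_pathToRoot (x : ι) : (hT.pathToRoot r x).IsPath :=
  (hT.connected.exists_path_of_dist x r).choose_spec.1

lemma length_pathToRoot (x : ι) : (hT.pathToRoot r x).length = T.dist r x :=
  (hT.connected.exists_path_of_dist x r).choose_spec.2.trans dist_comm

lemma pathToRoot_eq_cons {x y : ι} (h : T.Adj x y) (hd : T.dist r x = T.dist r y + 1) :
    hT.pathToRoot r x = .cons h (hT.pathToRoot r y) := by
  classical
  have hx : x ∉ (hT.pathToRoot r y).support := fun hx => by
    have hle := dist_le ((hT.pathToRoot r y).dropUntil x hx)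
    have hlen := (hT.pathToRoot r y).length_dropUntil_le_length hx
    rw [length_pathToRoot] at hlen
    rw [dist_comm] at hle
    omega
  have hpath := (Walk.cons_isPath_iff h _).2 ⟨hT.isPath_pathToRoot r y, hx⟩
  exact congrArg Subtype.val
    ((hT.isAcyclic.subsingleton_path x r).elim ⟨_, hT.isPath_pathToRoot r x⟩ ⟨_, hpath⟩)

variable {n : ℕ} (e : ι → Fin n)

/-- Read in base `n + 2`, least significant digit first, from the labels `e y + 1` along the path
from `x` to the root. All digits are nonzero, so deeper nodes get larger numbers, and nodes of
equal depth are compared through their parents first. -/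
noncomputable def bfsNumber (x : ι) : ℕ :=
  Nat.ofDigits (n + 2) ((hT.pathToRoot r x).support.map fun y => (e y : ℕ) + 1)

lemma bfsNumber_eq_of_adj {x y : ι} (h : T.Adj x y) (hd : T.dist r x = T.dist r y + 1) :
    hT.bfsNumber r e x = (e x + 1) + (n + 2) * hT.bfsNumber r e y := by
  rw [bfsNumber, pathToRoot_eq_cons hT r h hd, Walk.support_cons, List.map_cons,
    Nat.ofDigits_cons, bfsNumber]

lemma bfsNumber_mod (x : ι) : hT.bfsNumber r e x % (n + 2) = e x + 1 := by
  rw [bfsNumber, ← Walk.cons_tail_support, List.map_cons, Nat.ofDigits_cons,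
    Nat.add_mul_mod_self_left, Nat.mod_eq_of_lt (by omega)]

lemma bfsNumber_lt (x : ι) : hT.bfsNumber r e x < (n + 2) ^ (T.dist r x + 1) := by
  rw [← length_pathToRoot hT r x, ← Walk.length_support,
    ← List.length_map (f := fun y => (e y : ℕ) + 1)]
  refine Nat.ofDigits_lt_base_pow_length' fun d hd => ?_
  obtain ⟨y, -, rfl⟩ := List.mem_map.1 hd
  omega

lemma pow_le_bfsNumber (x : ι) : (n + 2) ^ T.dist r x ≤ hT.bfsNumber r e x := by
  have := Nat.pow_length_le_mul_ofDigits (b := n)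
    (l := (hT.pathToRoot r x).support.map fun y => (e y : ℕ) + 1) (by simp) (by simp)
  rw [List.length_map, Walk.length_support, length_pathToRoot, pow_succ'] at this
  exact Nat.le_of_mul_le_mul_left this (by omega)

lemma isBFSNumbering_bfsNumber (he : Function.Injective e) :
    T.IsBFSNumbering r (hT.bfsNumber r e) where
  injective x y hxy := by
    have := congrArg (· % (n + 2)) hxy
    simp only [bfsNumber_mod, add_left_inj] at this
    exact he (Fin.ext this)
  lt_of_dist_lt {a b} hab := calc
    hT.bfsNumber r e a < (n + 2) ^ (T.dist r a + 1) := hT.bfsNumber_lt r e a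
    _ ≤ (n + 2) ^ T.dist r b := Nat.pow_le_pow_right (by omega) hab
    _ ≤ hT.bfsNumber r e b := hT.pow_le_bfsNumber r e b
  lt_of_parent_lt {a a' b b'} ha hb hda hdb hab := by
    rw [hT.bfsNumber_eq_of_adj r e ha.symm hda, hT.bfsNumber_eq_of_adj r e hb.symm hdb]
    have := (e a').isLt
    nlinarith

end IsTree

lemma IsBFSNumbering.not_crossing {r : ι} {f : ι → ℕ} (hf : T.IsBFSNumbering r f)
    (hT : T.IsTree) {a b c d : ι} (hab : a = b ∨ T.Adj a b) (hcd : c = d ∨ T.Adj c d)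
    (hac : T.dist r a % 3 = T.dist r c % 3) (hbd : T.dist r b % 3 = T.dist r d % 3) :
    ¬ (f a < f c ∧ f d < f b) := by
  -- With depths matching mod 3, two tree edges that cross must join the same two layers.
  rintro ⟨hfac, hfdb⟩
  rcases hab with rfl | hab <;> rcases hcd with rfl | hcd
  · omega
  · exact hT.dist_mod_three_ne_of_adj r hcd (by omega)
  · exact hT.dist_mod_three_ne_of_adj r hab (by omega)
  have hac_le : T.dist r a ≤ T.dist r c := not_lt.1 fun h => (hf.lt_of_dist_lt h).not_gt hfac
  have hdb_le : T.dist r d ≤ T.dist r b := not_lt.1 fun h => (hf.lt_of_dist_lt h).not_gt hfdb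
  rcases hT.dist_eq_dist_add_one_of_adj r hab with h₁ | h₁ <;>
    rcases hT.dist_eq_dist_add_one_of_adj r hcd with h₂ | h₂
  · exact (hf.lt_of_parent_lt hcd.symm hab.symm h₂ h₁ hfdb).not_gt hfac
  · omega
  · omega
  · exact (hf.lt_of_parent_lt hab hcd h₁ h₂ hfac).not_gt hfdb

end SimpleGraph

lemma exists_fiberwise_injective {α β : Type*} [Finite α] (g : α → β) {k : ℕ}
    (hk : ∀ b, (g ⁻¹' {b}).ncard ≤ k) :
    ∃ idx : α → Fin k, Function.Injective fun a => (g a, idx a) := by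
  let emb (b : β) : g ⁻¹' {b} ↪ Fin k :=
    (Finite.equivFin _).toEmbedding.trans (Fin.castLEEmb (by rw [Nat.card_coe_set_eq]; exact hk b))
  have emb_inj : ∀ {a a' b b'} (ha : g a = b) (ha' : g a' = b'), b = b' →
      emb b ⟨a, ha⟩ = emb b' ⟨a', ha'⟩ → a = a' := by
    rintro a a' b b' ha ha' rfl h
    exact congrArg Subtype.val ((emb b).injective h)
  refine ⟨fun a => emb (g a) ⟨a, rfl⟩, fun a a' h => ?_⟩
  obtain ⟨hg, hemb⟩ := Prod.ext_iff.1 h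
  exact emb_inj rfl rfl hg hemb

theorem nonempty_trackLayout_of_map_to_tree {V : Type} {ι : Type*} {G : SimpleGraph V}
    {T : SimpleGraph ι} (hT : T.IsTree) {r : ι} {f : ι → ℕ} (hf : T.IsBFSNumbering r f)
    (node : V → ι) (hnode : ∀ ⦃v w⦄, G.Adj v w → node v = node w ∨ T.Adj (node v) (node w))
    {k : ℕ} (idx : V → Fin k) (hidx : Function.Injective fun v => (node v, idx v)) :
    Nonempty (TrackLayout V G (3 * k)) := by
  let layer (v : V) : Fin 3 := ⟨T.dist r (node v) % 3, Nat.mod_lt _ (by norm_num)⟩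
  have track_eq {v w : V}
      (h : finProdFinEquiv (layer v, idx v) = finProdFinEquiv (layer w, idx w)) :
      T.dist r (node v) % 3 = T.dist r (node w) % 3 ∧ idx v = idx w := by
    simpa [layer, Fin.ext_iff] using finProdFinEquiv.injective h
  refine ⟨{
    track v := finProdFinEquiv (layer v, idx v)
    pos v := f (node v)
    inj _ _ htrack hpos := hidx (Prod.ext (hf.injective hpos) (track_eq htrack).2)
    proper v w hvw htrack := ?_
    noX _ _ _ _ hvw hxy hvx hwy _ hpos hpos' := hf.not_crossing hT (hnode hvw) (hnode hxy)
      (track_eq hvx).1 (track_eq hwy).1 ⟨hpos, hpos'⟩ }⟩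
  obtain ⟨hlayer, hidx_eq⟩ := track_eq htrack
  rcases hnode hvw with h | h
  · exact hvw.ne (hidx (Prod.ext h hidx_eq))
  · exact hT.dist_mod_three_ne_of_adj r h hlayer

namespace TreePartition

variable {V : Type} {G : SimpleGraph V} (P : TreePartition V G)

noncomputable def node (v : V) : P.ι := (P.partition v).exists.choose

lemma node_eq_iff {v : V} {x : P.ι} : P.node v = x ↔ v ∈ P.bag x :=
  ⟨by rintro rfl; exact (P.partition v).exists.choose_spec,
    fun h => (P.partition v).unique (P.partition v).exists.choose_spec h⟩

lemma node_eq_or_adj {v w : V} (h : G.Adj v w) :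
    P.node v = P.node w ∨ P.tree.Adj (P.node v) (P.node w) := by
  rcases P.edgeOK v w h with ⟨x, hv, hw⟩ | ⟨x, y, hxy, hv, hw⟩
  · exact .inl ((P.node_eq_iff.2 hv).trans (P.node_eq_iff.2 hw).symm)
  · rw [P.node_eq_iff.2 hv, P.node_eq_iff.2 hw]
    exact .inr hxy

theorem nonempty_trackLayout [Finite V] {k : ℕ} (hk : ∀ x, (P.bag x).ncard ≤ k) :
    Nonempty (TrackLayout V G (3 * k)) := by
  have := P.finι
  obtain ⟨r⟩ := P.isTree.connected.nonempty
  have hfiber (x : P.ι) : P.node ⁻¹' {x} = P.bag x := Set.ext fun _ => P.node_eq_iff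
  obtain ⟨idx, hidx⟩ := exists_fiberwise_injective P.node fun x => hfiber x ▸ hk x
  exact nonempty_trackLayout_of_map_to_tree P.isTree
    (P.isTree.isBFSNumbering_bfsNumber r _ (Fintype.equivFin P.ι).injective)
    P.node (fun _ _ => P.node_eq_or_adj) idx hidx

def single (G : SimpleGraph V) : TreePartition V G where
  ι := Unit
  finι := inferInstance
  tree := ⊥
  isTree := .of_subsingleton
  bag _ := Set.univ
  partition _ := ⟨(), trivial, fun _ _ => rfl⟩
  edgeOK _ _ _ := .inl ⟨(), trivial, trivial⟩

end TreePartition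

lemma exists_treePartition_bag_ncard_le_treePartitionWidth {V : Type} (G : SimpleGraph V) :
    ∃ P : TreePartition V G, ∀ x, (P.bag x).ncard ≤ treePartitionWidth V G :=
  Nat.sInf_mem (s := {w | ∃ P : TreePartition V G, ∀ x, (P.bag x).ncard ≤ w})
    ⟨(Set.univ : Set V).ncard, TreePartition.single G, fun _ => le_rfl⟩

/-- Every graph `G` with tree-partition-width `tpw(G)` has
track-number `tn(G) ≤ 3 ⬝ tpw(G)`. -/
theorem trackNumber_le_three_treePartitionWidth {V : Type} [Fintype V]
    (G : SimpleGraph V) :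
    trackNumber V G ≤ 3 * treePartitionWidth V G := by
  obtain ⟨P, hP⟩ := exists_treePartition_bag_ncard_le_treePartitionWidth G
  exact Nat.sInf_le (P.nonempty_trackLayout hP)
end

section
/- If a graph G has a t-track layout, with tracks numbered 1,…,t, in which every edge has span at most s, then G has a (2s+1)-track layout. The same holds for improper track layouts: an improper t-track layout with maximum edge span s yields an improper (2s+1)-track layout. -/
open SimpleGraph

lemma wrap_aux1 (M q1 q2 p1 p2 : ℕ) (h1 : p1 < M) (h2 : p2 < M)
    (h : q1 * M + p1 ≤ q2 * M + p2) : q1 ≤ q2 := by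
  by_contra hc
  push_neg at hc
  have h3 : (q2 + 1) * M ≤ q1 * M := Nat.mul_le_mul_right M hc
  rw [add_one_mul] at h3
  omega

lemma wrap_aux3 (m a b : ℕ) (hmod : a % m = b % m) (h : a / m ≤ b / m) : a ≤ b := by
  have h3 : m * (a / m) ≤ m * (b / m) := Nat.mul_le_mul_left m h
  have h1 := Nat.div_add_mod a m
  have h2 := Nat.div_add_mod b m
  omega

lemma wrap_aux2 (m a b : ℕ) (hmod : a % m = b % m) (h : a / m < b / m) : a + m ≤ b := by
  have h3 : m * (a / m + 1) ≤ m * (b / m) := Nat.mul_le_mul_left m h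
  have h1 := Nat.div_add_mod a m
  have h2 := Nat.div_add_mod b m
  rw [Nat.mul_add, mul_one] at h3
  omega

lemma wrap_aux4 (m a b : ℕ) (hmod : a % m = b % m) (h : a / m = b / m) : a = b := by
  have h3 : m * (a / m) = m * (b / m) := by rw [h]
  have h1 := Nat.div_add_mod a m
  have h2 := Nat.div_add_mod b m
  omega

/-- **wrapping.** If a graph `G` has a `t`-track layout in which every
edge has span at most `s` (the span of an edge is the distance `|i - j|` between the
numbers of the tracks of its end-vertices), then `G` has a `(2s+1)`-track layout.
The same holds for improper track layouts. -/
theorem wrapping_track_layout {V : Type} [Fintype V] (G : SimpleGraph V) (t s : ℕ) :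
    (∀ L : TrackLayout V G t,
      (∀ v w : V, G.Adj v w → Nat.dist (L.track v : ℕ) (L.track w : ℕ) ≤ s) →
      Nonempty (TrackLayout V G (2 * s + 1))) ∧
    (∀ L : ImproperTrackLayout V G t,
      (∀ v w : V, G.Adj v w → Nat.dist (L.track v : ℕ) (L.track w : ℕ) ≤ s) →
      Nonempty (ImproperTrackLayout V G (2 * s + 1))) := by
  constructor
  · intro L hspan
    set m : ℕ := 2 * s + 1 with hmdef
    set M : ℕ := Finset.univ.sup L.pos + 1 with hMdef
    have hM : ∀ v : V, L.pos v < M :=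
      fun v => Nat.lt_succ_of_le (Finset.le_sup (Finset.mem_univ v))
    refine ⟨⟨fun v => ⟨(L.track v : ℕ) % m, Nat.mod_lt _ (by omega)⟩,
            fun v => (L.track v : ℕ) / m * M + L.pos v, ?_, ?_, ?_⟩⟩
    · intro v w ht hp
      have hmod : (L.track v : ℕ) % m = (L.track w : ℕ) % m := congrArg Fin.val ht
      have hq1 : (L.track v : ℕ) / m ≤ (L.track w : ℕ) / m :=
        wrap_aux1 M _ _ _ _ (hM v) (hM w) hp.le
      have hq2 : (L.track w : ℕ) / m ≤ (L.track v : ℕ) / m :=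
        wrap_aux1 M _ _ _ _ (hM w) (hM v) hp.ge
      have hq := le_antisymm hq1 hq2
      have hval : (L.track v : ℕ) = (L.track w : ℕ) := wrap_aux4 m _ _ hmod hq
      have hmul : (L.track v : ℕ) / m * M = (L.track w : ℕ) / m * M := by rw [hq]
      exact L.inj v w (Fin.val_injective hval) (by omega)
    · intro v w hadj heq
      have hmod : (L.track v : ℕ) % m = (L.track w : ℕ) % m := congrArg Fin.val heq
      have hne : (L.track v : ℕ) ≠ (L.track w : ℕ) :=
        fun h => L.proper v w hadj (Fin.val_injective h)
      have hd := hspan v w hadj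
      simp [Nat.dist] at hd
      rcases lt_trichotomy ((L.track v : ℕ) / m) ((L.track w : ℕ) / m) with h | h | h
      · have := wrap_aux2 m _ _ hmod h; omega
      · exact hne (wrap_aux4 m _ _ hmod h)
      · have := wrap_aux2 m _ _ hmod.symm h; omega
    · intro v w x y ha1 ha2 hvx hwy hne hp1 hp2
      have hmvx : (L.track v : ℕ) % m = (L.track x : ℕ) % m := congrArg Fin.val hvx
      have hmwy : (L.track w : ℕ) % m = (L.track y : ℕ) % m := congrArg Fin.val hwy
      have hnevw : (L.track v : ℕ) % m ≠ (L.track w : ℕ) % m :=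
        fun h => hne (Fin.ext h)
      have hq1 : (L.track v : ℕ) / m ≤ (L.track x : ℕ) / m :=
        wrap_aux1 M _ _ _ _ (hM v) (hM x) hp1.le
      have hq2 : (L.track y : ℕ) / m ≤ (L.track w : ℕ) / m :=
        wrap_aux1 M _ _ _ _ (hM y) (hM w) hp2.le
      have hd1 := hspan v w ha1
      have hd2 := hspan x y ha2
      simp [Nat.dist] at hd1 hd2
      rcases hq1.lt_or_eq with h1 | h1
      · have h3 := wrap_aux2 m _ _ hmvx h1
        have h4 := wrap_aux3 m _ _ hmwy.symm hq2
        omega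
      · rcases hq2.lt_or_eq with h2 | h2
        · have h3 := wrap_aux2 m _ _ hmwy.symm h2
          have h4 : (L.track v : ℕ) = (L.track x : ℕ) := wrap_aux4 m _ _ hmvx h1
          omega
        · have hTvx : (L.track v : ℕ) = (L.track x : ℕ) := wrap_aux4 m _ _ hmvx h1
          have hTyw : (L.track y : ℕ) = (L.track w : ℕ) := wrap_aux4 m _ _ hmwy.symm h2
          have htvx : L.track v = L.track x := Fin.val_injective hTvx
          have htwy : L.track w = L.track y := Fin.val_injective hTyw.symm
          have hnetr : L.track v ≠ L.track w := fun h => hnevw (by rw [h])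
          have hmul1 : (L.track v : ℕ) / m * M = (L.track x : ℕ) / m * M := by rw [h1]
          have hmul2 : (L.track y : ℕ) / m * M = (L.track w : ℕ) / m * M := by rw [h2]
          exact L.noX v w x y ha1 ha2 htvx htwy hnetr (by omega) (by omega)
  · intro L hspan
    set m : ℕ := 2 * s + 1 with hmdef
    set M : ℕ := Finset.univ.sup L.pos + 1 with hMdef
    have hM : ∀ v : V, L.pos v < M :=
      fun v => Nat.lt_succ_of_le (Finset.le_sup (Finset.mem_univ v))
    refine ⟨⟨fun v => ⟨(L.track v : ℕ) % m, Nat.mod_lt _ (by omega)⟩,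
            fun v => (L.track v : ℕ) / m * M + L.pos v, ?_, ?_, ?_⟩⟩
    · intro v w ht hp
      have hmod : (L.track v : ℕ) % m = (L.track w : ℕ) % m := congrArg Fin.val ht
      have hq1 : (L.track v : ℕ) / m ≤ (L.track w : ℕ) / m :=
        wrap_aux1 M _ _ _ _ (hM v) (hM w) hp.le
      have hq2 : (L.track w : ℕ) / m ≤ (L.track v : ℕ) / m :=
        wrap_aux1 M _ _ _ _ (hM w) (hM v) hp.ge
      have hq := le_antisymm hq1 hq2
      have hval : (L.track v : ℕ) = (L.track w : ℕ) := wrap_aux4 m _ _ hmod hq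
      have hmul : (L.track v : ℕ) / m * M = (L.track w : ℕ) / m * M := by rw [hq]
      exact L.inj v w (Fin.val_injective hval) (by omega)
    · intro v w x hadj htvw htxv hp1 hp2
      have hmvw : (L.track v : ℕ) % m = (L.track w : ℕ) % m := congrArg Fin.val htvw
      have hd := hspan v w hadj
      simp [Nat.dist] at hd
      have hTvw : (L.track v : ℕ) = (L.track w : ℕ) := by
        rcases lt_trichotomy ((L.track v : ℕ) / m) ((L.track w : ℕ) / m) with h | h | h
        · have := wrap_aux2 m _ _ hmvw h; omega
        · exact wrap_aux4 m _ _ hmvw h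
        · have := wrap_aux2 m _ _ hmvw.symm h; omega
      have hqvw : (L.track v : ℕ) / m = (L.track w : ℕ) / m := by rw [hTvw]
      have hq1 : (L.track v : ℕ) / m ≤ (L.track x : ℕ) / m :=
        wrap_aux1 M _ _ _ _ (hM v) (hM x) hp1.le
      have hq2 : (L.track x : ℕ) / m ≤ (L.track w : ℕ) / m :=
        wrap_aux1 M _ _ _ _ (hM x) (hM w) hp2.le
      have hqx : (L.track x : ℕ) / m = (L.track v : ℕ) / m :=
        le_antisymm (hqvw ▸ hq2) hq1
      have hmxv : (L.track x : ℕ) % m = (L.track v : ℕ) % m := congrArg Fin.val htxv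
      have hTx : (L.track x : ℕ) = (L.track v : ℕ) := wrap_aux4 m _ _ hmxv hqx
      have htrvw : L.track v = L.track w := Fin.val_injective hTvw
      have htrxv : L.track x = L.track v := Fin.val_injective hTx
      have hmul1 : (L.track v : ℕ) / m * M = (L.track x : ℕ) / m * M := by rw [hqx]
      have hmul2 : (L.track x : ℕ) / m * M = (L.track w : ℕ) / m * M := by
        rw [hqx, hqvw]
      exact L.consecutive v w x hadj htrvw htrxv (by omega) (by omega)
    · intro v w x y ha1 ha2 hvx hwy hne hp1 hp2
      have hmvx : (L.track v : ℕ) % m = (L.track x : ℕ) % m := congrArg Fin.val hvx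
      have hmwy : (L.track w : ℕ) % m = (L.track y : ℕ) % m := congrArg Fin.val hwy
      have hnevw : (L.track v : ℕ) % m ≠ (L.track w : ℕ) % m :=
        fun h => hne (Fin.ext h)
      have hq1 : (L.track v : ℕ) / m ≤ (L.track x : ℕ) / m :=
        wrap_aux1 M _ _ _ _ (hM v) (hM x) hp1.le
      have hq2 : (L.track y : ℕ) / m ≤ (L.track w : ℕ) / m :=
        wrap_aux1 M _ _ _ _ (hM y) (hM w) hp2.le
      have hd1 := hspan v w ha1
      have hd2 := hspan x y ha2
      simp [Nat.dist] at hd1 hd2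
      rcases hq1.lt_or_eq with h1 | h1
      · have h3 := wrap_aux2 m _ _ hmvx h1
        have h4 := wrap_aux3 m _ _ hmwy.symm hq2
        omega
      · rcases hq2.lt_or_eq with h2 | h2
        · have h3 := wrap_aux2 m _ _ hmwy.symm h2
          have h4 : (L.track v : ℕ) = (L.track x : ℕ) := wrap_aux4 m _ _ hmvx h1
          omega
        · have hTvx : (L.track v : ℕ) = (L.track x : ℕ) := wrap_aux4 m _ _ hmvx h1
          have hTyw : (L.track y : ℕ) = (L.track w : ℕ) := wrap_aux4 m _ _ hmwy.symm h2
          have htvx : L.track v = L.track x := Fin.val_injective hTvx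
          have htwy : L.track w = L.track y := Fin.val_injective hTyw.symm
          have hnetr : L.track v ≠ L.track w := fun h => hnevw (by rw [h])
          have hmul1 : (L.track v : ℕ) / m * M = (L.track x : ℕ) / m * M := by rw [h1]
          have hmul2 : (L.track y : ℕ) / m * M = (L.track w : ℕ) / m * M := by rw [h2]
          exact L.noX v w x y ha1 ha2 htvx htwy hnetr (by omega) (by omega)
end

section
/- If an n-vertex graph G has a t-track layout, then for every real t' > 0, G has a ⌊t + t'⌋-track layout in which every track contains at most ⌈n/t'⌉ vertices. The same holds for improper track layouts. -/
open SimpleGraph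

/-!
Cut every track into consecutive blocks of `m = ⌈n / t'⌉` vertices and make each block a track.
A track with `c` vertices yields at most `⌊c / m⌋ + 1` blocks, so there are at most
`t + ⌊n / m⌋ ≤ t + ⌊t'⌋` blocks. Each block inherits its order from its old track, so an
X-crossing between blocks of different old tracks is an X-crossing of the old layout. In the
improper case, two blocks of one old track are intervals of it, and edges inside a track join
consecutive vertices, so the two blocks are joined by at most one edge and cannot cross.
-/

open Finset

theorem Finset.sum_nat_div_le {ι : Type*} (s : Finset ι) (f : ι → ℕ) (m : ℕ) :
    ∑ i ∈ s, f i / m ≤ (∑ i ∈ s, f i) / m := by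
  rcases Nat.eq_zero_or_pos m with rfl | hm
  · simp
  rw [Nat.le_div_iff_mul_le hm, sum_mul]
  exact sum_le_sum fun i _ => Nat.div_mul_le_self _ _

theorem Nat.div_ceil_div_le_floor (n : ℕ) {s : ℝ} (hs : 0 < s) : n / ⌈n / s⌉₊ ≤ ⌊s⌋₊ := by
  refine Nat.le_floor (Nat.cast_div_le.trans (div_le_of_le_mul₀ (Nat.cast_nonneg _) hs.le ?_))
  rw [mul_comm, ← div_le_iff₀ hs]
  exact Nat.le_ceil _

theorem Nat.mod_lt_mod_iff_of_div_eq {a b m : ℕ} (h : a / m = b / m) :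
    a % m < b % m ↔ a < b := by
  have ha := Nat.div_add_mod a m
  have hb := Nat.div_add_mod b m
  rw [h] at ha
  generalize m * (b / m) = c at ha hb
  omega

theorem exists_fin_relabel {α β : Type*} [Fintype α] [DecidableEq β] (f : α → β) {k : ℕ}
    (hk : #(univ.image f) ≤ k) : ∃ g : α → Fin k, ∀ a b, g a = g b ↔ f a = f b :=
  ⟨fun a => Fin.castLE hk ((univ.image f).equivFin ⟨f a, mem_image_of_mem f (mem_univ a)⟩),
    fun a b => by simp [Fin.castLE_inj]⟩

section TrackRank

variable {V ι : Type*} [Fintype V] [DecidableEq ι] (track : V → ι) (pos : V → ℕ)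

def trackRank (v : V) : ℕ := #{u | track u = track v ∧ pos u < pos v}

def blockTrack (m : ℕ) (v : V) : ι × ℕ := (track v, trackRank track pos v / m)

variable {track pos}

theorem trackRank_le_trackRank {v w : V} (htr : track v = track w) (h : pos v ≤ pos w) :
    trackRank track pos v ≤ trackRank track pos w :=
  card_le_card fun u hu => by
    simp only [mem_filter, mem_univ, true_and] at hu ⊢
    exact ⟨hu.1.trans htr, hu.2.trans_le h⟩

theorem trackRank_lt_trackRank {v w : V} (htr : track v = track w) (h : pos v < pos w) :
    trackRank track pos v < trackRank track pos w := by
  refine card_lt_card ((ssubset_iff_of_subset fun u hu => ?_).2 ⟨v, by simp [htr, h], by simp⟩)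
  simp only [mem_filter, mem_univ, true_and] at hu ⊢
  exact ⟨hu.1.trans htr, hu.2.trans h⟩

theorem trackRank_lt_trackRank_iff {v w : V} (htr : track v = track w) :
    trackRank track pos v < trackRank track pos w ↔ pos v < pos w :=
  ⟨fun h => lt_of_not_ge fun h' => h.not_ge (trackRank_le_trackRank htr.symm h'),
    trackRank_lt_trackRank htr⟩

theorem trackRank_lt_card (v : V) : trackRank track pos v < #{u | track u = track v} :=
  card_lt_card ((ssubset_iff_of_subset fun u hu => by simp_all).2 ⟨v, by simp, by simp⟩)

theorem card_image_blockTrack_le [Fintype ι] (m : ℕ) :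
    #(univ.image (blockTrack track pos m)) ≤ Fintype.card ι + Fintype.card V / m := by
  set c : ι → ℕ := fun i => #{u | track u = i}
  have hsub : univ.image (blockTrack track pos m) ⊆
      univ.biUnion fun i => {i} ×ˢ range (c i / m + 1) := by
    simp only [subset_iff, mem_image, mem_univ, true_and, mem_biUnion, mem_product,
      mem_singleton, mem_range]
    rintro _ ⟨v, rfl⟩
    exact ⟨track v, rfl, Nat.lt_succ_of_le (Nat.div_le_div_right (trackRank_lt_card v).le)⟩
  have hsum : ∑ i, c i = Fintype.card V :=
    (card_eq_sum_card_fiberwise fun v _ => mem_univ (track v)).symm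
  calc #(univ.image (blockTrack track pos m))
      ≤ ∑ i, #({i} ×ˢ range (c i / m + 1)) := (card_le_card hsub).trans card_biUnion_le
    _ = Fintype.card ι + ∑ i, c i / m := by simp [sum_add_distrib, add_comm]
    _ ≤ Fintype.card ι + Fintype.card V / m := by
      rw [← hsum]
      exact Nat.add_le_add_left (sum_nat_div_le _ _ _) _

theorem exists_balanced_refinement [Fintype ι] (m k : ℕ)
    (hk : Fintype.card ι + Fintype.card V / m ≤ k) (hm : Nonempty V → 0 < m) :
    ∃ (track' : V → Fin k) (pos' : V → ℕ),
      (∀ v w, track' v = track' w → track v = track w) ∧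
      (∀ v w, track' v = track' w → (pos' v < pos' w ↔ pos v < pos w)) ∧
      (∀ u v w, track' u = track' w → track v = track u → pos u < pos v → pos v < pos w →
        track' v = track' u) ∧
      ∀ v, pos' v < m := by
  obtain ⟨g, hg⟩ := exists_fin_relabel _ ((card_image_blockTrack_le (pos := pos) m).trans hk)
  refine ⟨g, fun v => trackRank track pos v % m, fun v w h => congrArg Prod.fst ((hg v w).1 h),
    fun v w h => ?_, fun u v w h htr huv hvw => ?_, fun v => Nat.mod_lt _ (hm ⟨v⟩)⟩
  · obtain ⟨htr, hblock⟩ := Prod.ext_iff.1 ((hg v w).1 h)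
    exact (Nat.mod_lt_mod_iff_of_div_eq hblock).trans (trackRank_lt_trackRank_iff htr)
  · obtain ⟨htr', hblock⟩ := Prod.ext_iff.1 ((hg u w).1 h)
    refine (hg v u).2 (Prod.ext htr (le_antisymm ?_ ?_))
    · calc trackRank track pos v / m ≤ trackRank track pos w / m :=
            Nat.div_le_div_right (trackRank_lt_trackRank (htr.trans htr') hvw).le
        _ = trackRank track pos u / m := hblock.symm
    · exact Nat.div_le_div_right (trackRank_lt_trackRank htr.symm huv).le

end TrackRank

section Refinement

variable {V : Type} {G : SimpleGraph V} {t k : ℕ}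

theorem inj_of_refinement {κ κ' : Type*} {track : V → κ} {pos : V → ℕ} {track' : V → κ'}
    {pos' : V → ℕ} (inj : ∀ v w, track v = track w → pos v = pos w → v = w)
    (hsub : ∀ v w, track' v = track' w → track v = track w)
    (hord : ∀ v w, track' v = track' w → (pos' v < pos' w ↔ pos v < pos w)) :
    ∀ v w, track' v = track' w → pos' v = pos' w → v = w := by
  intro v w h hp
  refine inj v w (hsub v w h) (le_antisymm ?_ ?_) <;> refine le_of_not_gt fun hlt => ?_
  · exact ((hord w v h.symm).2 hlt).ne hp.symm
  · exact ((hord v w h).2 hlt).ne hp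

theorem ncard_fiber_le {κ : Type*} {track : V → κ} {pos : V → ℕ}
    (inj : ∀ v w, track v = track w → pos v = pos w → v = w) {m : ℕ} (hpos : ∀ v, pos v < m)
    (i : κ) : {v | track v = i}.ncard ≤ m :=
  calc {v | track v = i}.ncard
      ≤ (Set.Iio m).ncard := Set.ncard_le_ncard_of_injOn pos (fun v _ => hpos v)
        (fun v hv w hw h => inj v w (hv.trans hw.symm) h) (Set.finite_Iio m)
    _ = m := Set.ncard_Iio_nat m

def TrackLayout.refine (L : TrackLayout V G t) (track' : V → Fin k) (pos' : V → ℕ)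
    (hsub : ∀ v w, track' v = track' w → L.track v = L.track w)
    (hord : ∀ v w, track' v = track' w → (pos' v < pos' w ↔ L.pos v < L.pos w)) :
    TrackLayout V G k where
  track := track'
  pos := pos'
  inj := inj_of_refinement L.inj hsub hord
  proper v w hvw h := L.proper v w hvw (hsub v w h)
  noX v w x y hvw hxy hvx hwy _ hlt hlt' := L.noX v w x y hvw hxy (hsub v x hvx) (hsub w y hwy)
    (L.proper v w hvw) ((hord v x hvx).1 hlt) ((hord y w hwy.symm).1 hlt')

theorem ImproperTrackLayout.not_crossing_of_track_eq (L : ImproperTrackLayout V G t)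
    {track' : V → Fin k}
    (hconvex : ∀ u v w, track' u = track' w → L.track v = L.track u → L.pos u < L.pos v →
      L.pos v < L.pos w → track' v = track' u)
    {v w x y : V} (hvw : G.Adj v w) (hxy : G.Adj x y) (hvx : L.track v = L.track x)
    (hwy : L.track w = L.track y) (htr : L.track v = L.track w) (hvx' : track' v = track' x)
    (hne : track' v ≠ track' w) (hlt : L.pos v < L.pos x) (hlt' : L.pos y < L.pos w) : False := by
  rcases lt_trichotomy (L.pos v) (L.pos w) with hv | hv | hv
  · rcases lt_trichotomy (L.pos x) (L.pos w) with hx | hx | hx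
    · exact L.consecutive v w x hvw htr hvx.symm hlt hx
    · exact hne (hvx'.trans (congrArg track' (L.inj x w (hvx.symm.trans htr) hx)))
    · exact hne (hconvex v w x hvx' htr.symm hv hx).symm
  · exact G.ne_of_adj hvw (L.inj v w htr hv)
  · exact L.consecutive y x w hxy.symm (hwy.symm.trans (htr.symm.trans hvx)) hwy
      hlt' (hv.trans hlt)

def ImproperTrackLayout.refine (L : ImproperTrackLayout V G t) (track' : V → Fin k)
    (pos' : V → ℕ) (hsub : ∀ v w, track' v = track' w → L.track v = L.track w)
    (hord : ∀ v w, track' v = track' w → (pos' v < pos' w ↔ L.pos v < L.pos w))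
    (hconvex : ∀ u v w, track' u = track' w → L.track v = L.track u → L.pos u < L.pos v →
      L.pos v < L.pos w → track' v = track' u) :
    ImproperTrackLayout V G k where
  track := track'
  pos := pos'
  inj := inj_of_refinement L.inj hsub hord
  consecutive v w x hvw htr hx hvx hxw := L.consecutive v w x hvw (hsub v w htr) (hsub x v hx)
    ((hord v x hx.symm).1 hvx) ((hord x w (hx.trans htr)).1 hxw)
  noX v w x y hvw hxy hvx hwy hne hlt hlt' := by
    have hlt := (hord v x hvx).1 hlt
    have hlt' := (hord y w hwy.symm).1 hlt'
    by_cases htr : L.track v = L.track w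
    · exact L.not_crossing_of_track_eq hconvex hvw hxy (hsub v x hvx) (hsub w y hwy) htr hvx
        hne hlt hlt'
    · exact L.noX v w x y hvw hxy (hsub v x hvx) (hsub w y hwy) htr hlt hlt'

variable [Fintype V] {m : ℕ}

theorem TrackLayout.exists_balanced (L : TrackLayout V G t)
    (hk : t + Fintype.card V / m ≤ k) (hm : Nonempty V → 0 < m) :
    ∃ L' : TrackLayout V G k, ∀ i, {v | L'.track v = i}.ncard ≤ m := by
  obtain ⟨track', pos', hsub, hord, -, hpos⟩ :=
    exists_balanced_refinement (track := L.track) (pos := L.pos) m k (by rwa [Fintype.card_fin]) hm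
  exact ⟨L.refine track' pos' hsub hord, ncard_fiber_le (L.refine track' pos' hsub hord).inj hpos⟩

theorem ImproperTrackLayout.exists_balanced (L : ImproperTrackLayout V G t)
    (hk : t + Fintype.card V / m ≤ k) (hm : Nonempty V → 0 < m) :
    ∃ L' : ImproperTrackLayout V G k, ∀ i, {v | L'.track v = i}.ncard ≤ m := by
  obtain ⟨track', pos', hsub, hord, hconvex, hpos⟩ :=
    exists_balanced_refinement (track := L.track) (pos := L.pos) m k (by rwa [Fintype.card_fin]) hm
  exact ⟨L.refine track' pos' hsub hord hconvex,
    ncard_fiber_le (L.refine track' pos' hsub hord hconvex).inj hpos⟩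

end Refinement

/-- **balancing.** If an `n`-vertex graph `G` has a `t`-track layout,
then for every real `t' > 0`, `G` has a `⌊t + t'⌋`-track layout in which every track
contains at most `⌈n / t'⌉` vertices. The same holds for improper track layouts. -/
theorem balancing_track_layout {V : Type} [Fintype V] (G : SimpleGraph V)
    (t : ℕ) (t' : ℝ) (ht' : 0 < t') :
    (∀ _L : TrackLayout V G t,
      ∃ L' : TrackLayout V G ⌊(t : ℝ) + t'⌋₊,
        ∀ i, {v : V | L'.track v = i}.ncard ≤ ⌈(Fintype.card V : ℝ) / t'⌉₊) ∧
    (∀ _L : ImproperTrackLayout V G t,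
      ∃ L' : ImproperTrackLayout V G ⌊(t : ℝ) + t'⌋₊,
        ∀ i, {v : V | L'.track v = i}.ncard ≤ ⌈(Fintype.card V : ℝ) / t'⌉₊) := by
  have hk : t + Fintype.card V / ⌈(Fintype.card V : ℝ) / t'⌉₊ ≤ ⌊(t : ℝ) + t'⌋₊ := by
    rw [add_comm (t : ℝ), Nat.floor_add_natCast ht'.le, add_comm ⌊t'⌋₊]
    exact Nat.add_le_add_left (Nat.div_ceil_div_le_floor _ ht') t
  have hm : Nonempty V → 0 < ⌈(Fintype.card V : ℝ) / t'⌉₊ := fun _ =>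
    Nat.ceil_pos.2 (div_pos (Nat.cast_pos.2 Fintype.card_pos) ht')
  exact ⟨fun L => L.exists_balanced hk hm, fun L => L.exists_balanced hk hm⟩
end

section
/- If a graph G has an A × B × C three-dimensional drawing, then G has an improper (A·B)-track layout, and hence G has a (proper) 2·A·B-track layout. -/
open SimpleGraph

/-- The point of `ℝ³` corresponding to a grid-point of `ℤ³`. -/
def gridPt (p : Fin 3 → ℤ) : Fin 3 → ℝ := fun i => (p i : ℝ)

/-- A three-dimensional straight-line grid drawing of `G`: vertices are represented by
distinct points of `ℤ³`, edges by the closed segments between their end-vertices;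
an edge only intersects a vertex that is an end-vertex of that edge, and two edge
segments intersect only at a common end-vertex. -/
structure Drawing3D (V : Type) (G : SimpleGraph V) where
  /-- the grid-point representing each vertex -/
  pos : V → Fin 3 → ℤ
  inj : Function.Injective pos
  /-- an edge segment intersects a vertex point only at an end-vertex of the edge -/
  vertexDisjoint : ∀ v w x : V, G.Adj v w →
    gridPt (pos x) ∈ segment ℝ (gridPt (pos v)) (gridPt (pos w)) → x = v ∨ x = w
  /-- the segments of two distinct edges intersect only at a common end-vertex -/
  edgesDisjoint : ∀ v w x y : V, G.Adj v w → G.Adj x y →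
    ¬ ((x = v ∧ y = w) ∨ (x = w ∧ y = v)) →
    ∀ p : Fin 3 → ℝ, p ∈ segment ℝ (gridPt (pos v)) (gridPt (pos w)) →
      p ∈ segment ℝ (gridPt (pos x)) (gridPt (pos y)) →
      (p = gridPt (pos v) ∧ (v = x ∨ v = y)) ∨ (p = gridPt (pos w) ∧ (w = x ∨ w = y))

/-- The drawing fits in an axis-aligned box with side lengths `X-1`, `Y-1` and `Z-1`
(i.e. it is an `X × Y × Z` drawing). -/
def Drawing3D.InBox {V : Type} {G : SimpleGraph V} (D : Drawing3D V G)
    (X Y Z : ℕ) : Prop :=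
  ∃ o : Fin 3 → ℤ, ∀ v : V,
    o 0 ≤ D.pos v 0 ∧ D.pos v 0 < o 0 + X ∧
    o 1 ≤ D.pos v 1 ∧ D.pos v 1 < o 1 + Y ∧
    o 2 ≤ D.pos v 2 ∧ D.pos v 2 < o 2 + Z

lemma pair_decode {a1 b1 a2 b2 B : ℕ} (h1 : b1 < B) (h2 : b2 < B)
    (h : a1 * B + b1 = a2 * B + b2) : a1 = a2 ∧ b1 = b2 := by
  rcases Nat.lt_trichotomy a1 a2 with h' | h' | h'
  · exfalso
    have hle : (a1 + 1) * B ≤ a2 * B := mul_le_mul_left (by omega) B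
    rw [add_mul, one_mul] at hle
    linarith
  · subst h'
    exact ⟨rfl, Nat.add_left_cancel h⟩
  · exfalso
    have hle : (a2 + 1) * B ≤ a1 * B := mul_le_mul_left (by omega) B
    rw [add_mul, one_mul] at hle
    linarith

/-- The rank of a vertex within its track: the number of vertices on the same
track with a smaller position. -/
noncomputable def ITLrank {V : Type} [Fintype V] {G : SimpleGraph V} {t : ℕ}
    (T : ImproperTrackLayout V G t) (v : V) : ℕ :=
  {u : V | T.track u = T.track v ∧ T.pos u < T.pos v}.ncard

lemma ITLrank_lt {V : Type} [Fintype V] {G : SimpleGraph V} {t : ℕ}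
    (T : ImproperTrackLayout V G t) {u v : V} (ht : T.track u = T.track v)
    (hp : T.pos u < T.pos v) : ITLrank T u < ITLrank T v := by
  apply Set.ncard_lt_ncard _ (Set.toFinite _)
  rw [Set.ssubset_iff_of_subset]
  · exact ⟨u, ⟨ht, hp⟩, fun h => lt_irrefl _ h.2⟩
  · rintro w ⟨hw1, hw2⟩
    exact ⟨hw1.trans ht, hw2.trans hp⟩

lemma ITLrank_succ {V : Type} [Fintype V] {G : SimpleGraph V} {t : ℕ}
    (T : ImproperTrackLayout V G t) {v w : V} (hadj : G.Adj v w)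
    (ht : T.track v = T.track w) (hp : T.pos v < T.pos w) :
    ITLrank T w = ITLrank T v + 1 := by
  have hset : {u : V | T.track u = T.track w ∧ T.pos u < T.pos w}
      = insert v {u : V | T.track u = T.track v ∧ T.pos u < T.pos v} := by
    ext u
    simp only [Set.mem_setOf_eq, Set.mem_insert_iff]
    constructor
    · rintro ⟨h1, h2⟩
      rcases Nat.lt_trichotomy (T.pos u) (T.pos v) with h' | h' | h'
      · exact Or.inr ⟨h1.trans ht.symm, h'⟩
      · exact Or.inl (T.inj u v (h1.trans ht.symm) h')
      · exact (T.consecutive v w u hadj ht (h1.trans ht.symm) h' h2).elim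
    · rintro (rfl | ⟨h1, h2⟩)
      · exact ⟨ht, hp⟩
      · exact ⟨h1.trans ht, h2.trans hp⟩
  rw [ITLrank, hset,
    Set.ncard_insert_of_notMem (fun h => lt_irrefl _ h.2) (Set.toFinite _)]
  rfl

lemma ITLrank_adj {V : Type} [Fintype V] {G : SimpleGraph V} {t : ℕ}
    (T : ImproperTrackLayout V G t) {v w : V} (hadj : G.Adj v w)
    (ht : T.track v = T.track w) :
    ITLrank T w = ITLrank T v + 1 ∨ ITLrank T v = ITLrank T w + 1 := by
  rcases Nat.lt_trichotomy (T.pos v) (T.pos w) with h | h | h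
  · exact Or.inl (ITLrank_succ T hadj ht h)
  · exact absurd (T.inj v w ht h) hadj.ne
  · exact Or.inr (ITLrank_succ T hadj.symm ht.symm h)

lemma improper_to_proper {V : Type} [Fintype V] {G : SimpleGraph V} {t : ℕ}
    (T : ImproperTrackLayout V G t) : Nonempty (TrackLayout V G (2 * t)) := by
  refine ⟨⟨fun v => ⟨2 * (T.track v).val + ITLrank T v % 2,
      by have := (T.track v).isLt; omega⟩, T.pos, ?_, ?_, ?_⟩⟩
  · intro v w h1 h2
    have h1' : 2 * (T.track v).val + ITLrank T v % 2
        = 2 * (T.track w).val + ITLrank T w % 2 := congrArg Fin.val h1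
    exact T.inj v w (Fin.ext (by omega)) h2
  · intro v w hadj h1
    have h1' : 2 * (T.track v).val + ITLrank T v % 2
        = 2 * (T.track w).val + ITLrank T w % 2 := congrArg Fin.val h1
    have ht : T.track v = T.track w := Fin.ext (by omega)
    have := ITLrank_adj T hadj ht
    omega
  · intro v w x y h1 h2 htvx htwy htvw hpvx hpyw
    have e1 : 2 * (T.track v).val + ITLrank T v % 2
        = 2 * (T.track x).val + ITLrank T x % 2 := congrArg Fin.val htvx
    have e2 : 2 * (T.track w).val + ITLrank T w % 2
        = 2 * (T.track y).val + ITLrank T y % 2 := congrArg Fin.val htwy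
    have ht1 : T.track v = T.track x := Fin.ext (by omega)
    have ht2 : T.track w = T.track y := Fin.ext (by omega)
    by_cases hc : T.track v = T.track w
    · have hcv : (T.track v).val = (T.track w).val := congrArg Fin.val hc
      have hrvx : ITLrank T v < ITLrank T x := ITLrank_lt T ht1 hpvx
      have hryw : ITLrank T y < ITLrank T w := ITLrank_lt T ht2.symm hpyw
      have ha1 := ITLrank_adj T h1 hc
      have ha2 := ITLrank_adj T h2 (ht1.symm.trans (hc.trans ht2))
      have hne : 2 * (T.track v).val + ITLrank T v % 2
          ≠ 2 * (T.track w).val + ITLrank T w % 2 := fun h => htvw (Fin.ext h)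
      rcases ha1 with h | h <;> rcases ha2 with h' | h' <;> omega
    · exact T.noX v w x y h1 h2 ht1 ht2 hc hpvx hpyw

/-- If a graph `G` has an `A × B × C` three-dimensional drawing,
then `G` has an improper `A⬝B`-track layout, and hence `G` has a (proper)
`2⬝A⬝B`-track layout. -/
theorem drawing_to_track_layout {V : Type} [Fintype V] (G : SimpleGraph V)
    (A B C : ℕ) (D : Drawing3D V G) (hbox : D.InBox A B C) :
    Nonempty (ImproperTrackLayout V G (A * B)) ∧
    Nonempty (TrackLayout V G (2 * (A * B))) := by
  obtain ⟨o, ho⟩ := hbox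
  have hA : ∀ v : V, (D.pos v 0 - o 0).toNat < A := fun v => by have := ho v; omega
  have hB : ∀ v : V, (D.pos v 1 - o 1).toNat < B := fun v => by have := ho v; omega
  have htrbd : ∀ v : V,
      (D.pos v 0 - o 0).toNat * B + (D.pos v 1 - o 1).toNat < A * B := by
    intro v
    have h3 : (D.pos v 0 - o 0).toNat * B + (D.pos v 1 - o 1).toNat
        < ((D.pos v 0 - o 0).toNat + 1) * B := by
      rw [add_mul, one_mul]
      exact Nat.add_lt_add_left (hB v) _
    exact lt_of_lt_of_le h3 (mul_le_mul_left (Nat.succ_le_of_lt (hA v)) B)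
  have T : ImproperTrackLayout V G (A * B) := by
    refine ⟨fun v => ⟨(D.pos v 0 - o 0).toNat * B + (D.pos v 1 - o 1).toNat, htrbd v⟩,
      fun v => (D.pos v 2 - o 2).toNat, ?_, ?_, ?_⟩
    · -- inj
      intro v w htr hpos
      beta_reduce at hpos
      have h := congrArg Fin.val htr
      obtain ⟨e0, e1⟩ := pair_decode (hB v) (hB w) h
      have hov := ho v; have how := ho w
      have c0 : D.pos v 0 = D.pos w 0 := by omega
      have c1 : D.pos v 1 = D.pos w 1 := by omega
      have c2 : D.pos v 2 = D.pos w 2 := by omega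
      apply D.inj
      funext i
      fin_cases i
      · exact c0
      · exact c1
      · exact c2
    · -- consecutive
      intro v w x hadj htvw htxv hpvx hpxw
      beta_reduce at hpvx hpxw
      obtain ⟨e0, e1⟩ := pair_decode (hB v) (hB w) (congrArg Fin.val htvw)
      obtain ⟨f0, f1⟩ := pair_decode (hB x) (hB v) (congrArg Fin.val htxv)
      have hov := ho v; have how := ho w; have hox := ho x
      have c0vw : D.pos v 0 = D.pos w 0 := by omega
      have c1vw : D.pos v 1 = D.pos w 1 := by omega
      have c0xv : D.pos x 0 = D.pos v 0 := by omega
      have c1xv : D.pos x 1 = D.pos v 1 := by omega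
      have hz1 : D.pos v 2 < D.pos x 2 := by omega
      have hz2 : D.pos x 2 < D.pos w 2 := by omega
      set t : ℝ := ((D.pos x 2 - D.pos v 2 : ℤ) : ℝ) / ((D.pos w 2 - D.pos v 2 : ℤ) : ℝ)
        with htdef
      have hdenpos : (0 : ℝ) < ((D.pos w 2 - D.pos v 2 : ℤ) : ℝ) := by
        exact_mod_cast (show (0 : ℤ) < D.pos w 2 - D.pos v 2 by omega)
      have hnum0 : (0 : ℝ) ≤ ((D.pos x 2 - D.pos v 2 : ℤ) : ℝ) := by
        exact_mod_cast (show (0 : ℤ) ≤ D.pos x 2 - D.pos v 2 by omega)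
      have ht0 : 0 ≤ t := div_nonneg hnum0 hdenpos.le
      have ht1 : t ≤ 1 := by
        rw [htdef, div_le_one hdenpos]
        exact_mod_cast (show (D.pos x 2 - D.pos v 2 : ℤ) ≤ D.pos w 2 - D.pos v 2 by omega)
      have hmem : gridPt (D.pos x) ∈ segment ℝ (gridPt (D.pos v)) (gridPt (D.pos w)) := by
        refine ⟨1 - t, t, by linarith, ht0, by ring, ?_⟩
        funext i
        fin_cases i
        · show (1 - t) * ((D.pos v 0 : ℤ) : ℝ) + t * ((D.pos w 0 : ℤ) : ℝ)
            = ((D.pos x 0 : ℤ) : ℝ)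
          rw [c0xv, c0vw]; ring
        · show (1 - t) * ((D.pos v 1 : ℤ) : ℝ) + t * ((D.pos w 1 : ℤ) : ℝ)
            = ((D.pos x 1 : ℤ) : ℝ)
          rw [c1xv, c1vw]; ring
        · show (1 - t) * ((D.pos v 2 : ℤ) : ℝ) + t * ((D.pos w 2 : ℤ) : ℝ)
            = ((D.pos x 2 : ℤ) : ℝ)
          have hlt : ((D.pos v 2 : ℤ) : ℝ) < ((D.pos w 2 : ℤ) : ℝ) := by
            exact_mod_cast (show D.pos v 2 < D.pos w 2 by omega)
          rw [htdef]
          push_cast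
          field_simp [sub_ne_zero.mpr hlt.ne']
          ring
      rcases D.vertexDisjoint v w x hadj hmem with h | h
      · rw [h] at hz1; exact lt_irrefl _ hz1
      · rw [h] at hz2; exact lt_irrefl _ hz2
    · -- noX
      intro v w x y hadj1 hadj2 htvx htwy htvw hpvx hpyw
      beta_reduce at hpvx hpyw
      obtain ⟨e0, e1⟩ := pair_decode (hB v) (hB x) (congrArg Fin.val htvx)
      obtain ⟨f0, f1⟩ := pair_decode (hB w) (hB y) (congrArg Fin.val htwy)
      have hov := ho v; have how := ho w; have hox := ho x; have hoy := ho y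
      have c0vx : D.pos v 0 = D.pos x 0 := by omega
      have c1vx : D.pos v 1 = D.pos x 1 := by omega
      have c0wy : D.pos w 0 = D.pos y 0 := by omega
      have c1wy : D.pos w 1 = D.pos y 1 := by omega
      have hzvx : D.pos v 2 < D.pos x 2 := by omega
      have hzyw : D.pos y 2 < D.pos w 2 := by omega
      set S : ℝ := ((D.pos x 2 - D.pos v 2 : ℤ) : ℝ) with hSdef
      set U : ℝ := ((D.pos w 2 - D.pos y 2 : ℤ) : ℝ) with hUdef
      have hSpos : 0 < S := by
        rw [hSdef]
        exact_mod_cast (show (0 : ℤ) < D.pos x 2 - D.pos v 2 by omega)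
      have hUpos : 0 < U := by
        rw [hUdef]
        exact_mod_cast (show (0 : ℤ) < D.pos w 2 - D.pos y 2 by omega)
      have hSU : 0 < S + U := by linarith
      set t : ℝ := S / (S + U) with htdef
      have ht0 : 0 ≤ t := div_nonneg hSpos.le hSU.le
      have ht1 : t ≤ 1 := by rw [htdef, div_le_one hSU]; linarith
      set p : Fin 3 → ℝ := (1 - t) • gridPt (D.pos v) + t • gridPt (D.pos w) with hpdef
      have hp1 : p ∈ segment ℝ (gridPt (D.pos v)) (gridPt (D.pos w)) :=
        ⟨1 - t, t, by linarith, ht0, by ring, hpdef.symm⟩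
      have hp2 : p ∈ segment ℝ (gridPt (D.pos x)) (gridPt (D.pos y)) := by
        refine ⟨1 - t, t, by linarith, ht0, by ring, ?_⟩
        rw [hpdef]
        funext i
        fin_cases i
        · show (1 - t) * ((D.pos x 0 : ℤ) : ℝ) + t * ((D.pos y 0 : ℤ) : ℝ)
            = (1 - t) * ((D.pos v 0 : ℤ) : ℝ) + t * ((D.pos w 0 : ℤ) : ℝ)
          rw [c0vx, c0wy]
        · show (1 - t) * ((D.pos x 1 : ℤ) : ℝ) + t * ((D.pos y 1 : ℤ) : ℝ)
            = (1 - t) * ((D.pos v 1 : ℤ) : ℝ) + t * ((D.pos w 1 : ℤ) : ℝ)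
          rw [c1vx, c1wy]
        · show (1 - t) * ((D.pos x 2 : ℤ) : ℝ) + t * ((D.pos y 2 : ℤ) : ℝ)
            = (1 - t) * ((D.pos v 2 : ℤ) : ℝ) + t * ((D.pos w 2 : ℤ) : ℝ)
          have ex : ((D.pos x 2 : ℤ) : ℝ) = ((D.pos v 2 : ℤ) : ℝ) + S := by
            rw [hSdef]; push_cast; ring
          have ew : ((D.pos w 2 : ℤ) : ℝ) = ((D.pos y 2 : ℤ) : ℝ) + U := by
            rw [hUdef]; push_cast; ring
          rw [ex, ew, htdef]
          field_simp [hSU.ne']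
          ring
      have hne : ¬ ((x = v ∧ y = w) ∨ (x = w ∧ y = v)) := by
        rintro (⟨h, -⟩ | ⟨h, -⟩)
        · rw [h] at hzvx; exact lt_irrefl _ hzvx
        · rw [h] at htvx; exact htvw htvx
      rcases D.edgesDisjoint v w x y hadj1 hadj2 hne p hp1 hp2 with ⟨-, h | h⟩ | ⟨-, h | h⟩
      · rw [← h] at hzvx; exact lt_irrefl _ hzvx
      · rw [← h] at htwy; exact htvw htwy.symm
      · rw [← h] at htvx; exact htvw htvx
      · rw [h] at hzyw; exact lt_irrefl _ hzyw
  exact ⟨⟨T⟩, improper_to_proper T⟩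
end

section
/- If a graph G has a (possibly improper) k-track layout in which every track contains at most n' vertices, then G has a k × 2k × (2k·n') three-dimensional drawing. In particular, for any prime p with k < p ≤ 2k, placing the vertices of track i (1 ≤ i ≤ k) at the points {(i, i² mod p, t) : 1 ≤ t ≤ p·|V_i|, t ≡ i³ (mod p)} with Z-coordinates respecting the track order, and drawing edges as straight segments, yields a crossing-free drawing. -/
open SimpleGraph

-- ===== auxiliary lemmas =====
section Aux

lemma cast_emod (p : ℕ) (a : ℤ) : ((a % (p:ℤ) : ℤ) : ZMod p) = (a : ZMod p) := by
  have h : ((p : ℤ) : ZMod p) = 0 := by push_cast; exact ZMod.natCast_self p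
  rw [Int.emod_def]; push_cast [h]; ring

lemma modp_inj {k p : ℕ} (hkp : k < p) {a b : ℤ}
    (ha1 : 1 ≤ a) (hak : a ≤ k) (hb1 : 1 ≤ b) (hbk : b ≤ k) (hab : a ≠ b) :
    (a : ZMod p) ≠ (b : ZMod p) := by
  intro h
  have hd : (p : ℤ) ∣ a - b := by
    rwa [← sub_eq_zero, ← Int.cast_sub, ZMod.intCast_zmod_eq_zero_iff_dvd] at h
  have h4 : a - b = 0 := by
    apply Int.eq_zero_of_abs_lt_dvd hd
    have : (k : ℤ) < p := by exact_mod_cast hkp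
    rw [abs_sub_lt_iff]; omega
  omega

lemma noncoll {k p : ℕ} (hp : p.Prime) (hkp : k < p) {a b c : ℤ}
    (ha1 : 1 ≤ a) (hak : a ≤ k) (hb1 : 1 ≤ b) (hbk : b ≤ k) (hc1 : 1 ≤ c) (hck : c ≤ k)
    (hab : a ≠ b) (hac : a ≠ c) (hbc : b ≠ c) :
    (b - a) * (c^2 % p - a^2 % p) ≠ (c - a) * (b^2 % p - a^2 % p) := by
  haveI := Fact.mk hp
  intro h
  have hcast := congrArg (fun z : ℤ => (z : ZMod p)) h
  push_cast [cast_emod] at hcast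
  have key : ((b:ZMod p) - a) * ((c:ZMod p) - a) * ((c:ZMod p) - b) = 0 := by
    linear_combination hcast
  rcases mul_eq_zero.1 key with h' | h'
  · rcases mul_eq_zero.1 h' with h'' | h''
    · exact modp_inj hkp hb1 hbk ha1 hak (Ne.symm hab) (sub_eq_zero.1 h'')
    · exact modp_inj hkp hc1 hck ha1 hak (Ne.symm hac) (sub_eq_zero.1 h'')
  · exact modp_inj hkp hc1 hck hb1 hbk (Ne.symm hbc) (sub_eq_zero.1 h')

set_option maxHeartbeats 1000000 in
lemma vandFour {k p : ℕ} (hp : p.Prime) (hkp : k < p) {xa xb xc xd : ℤ}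
    (ha1 : 1 ≤ xa) (hak : xa ≤ k) (hb1 : 1 ≤ xb) (hbk : xb ≤ k)
    (hc1 : 1 ≤ xc) (hck : xc ≤ k) (hd1 : 1 ≤ xd) (hdk : xd ≤ k)
    (hab : xa ≠ xb) (hac : xa ≠ xc) (had : xa ≠ xd)
    (hbc : xb ≠ xc) (hbd : xb ≠ xd) (hcd : xc ≠ xd)
    {A B C D : Fin 3 → ℤ}
    (hA0 : A 0 = xa) (hA1 : A 1 = xa^2 % p) (hA2 : ((A 2 : ℤ) : ZMod p) = (xa : ZMod p)^3)
    (hB0 : B 0 = xb) (hB1 : B 1 = xb^2 % p) (hB2 : ((B 2 : ℤ) : ZMod p) = (xb : ZMod p)^3)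
    (hC0 : C 0 = xc) (hC1 : C 1 = xc^2 % p) (hC2 : ((C 2 : ℤ) : ZMod p) = (xc : ZMod p)^3)
    (hD0 : D 0 = xd) (hD1 : D 1 = xd^2 % p) (hD2 : ((D 2 : ℤ) : ZMod p) = (xd : ZMod p)^3)
    {α β γ δ : ℝ} (hs1 : α + β = 1) (hs2 : γ + δ = 1)
    (heq : ∀ i : Fin 3, α * A i + β * B i = γ * C i + δ * D i) : False := by
  haveI := Fact.mk hp
  set M : Matrix (Fin 4) (Fin 4) ℤ :=
    Matrix.of ![![1, A 0, A 1, A 2], ![1, B 0, B 1, B 2],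
                ![1, C 0, C 1, C 2], ![1, D 0, D 1, D 2]] with hM
  have hdetR : (M.map (fun z : ℤ => (z : ℝ))).det = 0 := by
    rw [← Matrix.exists_vecMul_eq_zero_iff]
    refine ⟨![α, β, -γ, -δ], ?_, ?_⟩
    · intro h0
      have h2 := congrFun h0 0
      have h1 := congrFun h0 1
      simp at h2 h1
      rw [h2, h1] at hs1
      norm_num at hs1
    · funext j
      have e0 := heq 0
      have e1 := heq 1
      have e2 := heq 2
      fin_cases j <;>
        simp [Matrix.vecMul, dotProduct, Fin.sum_univ_four, hM] <;>
        push_cast <;> linarith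
  have hdetZ : M.det = 0 := by
    have h5 := RingHom.map_det (Int.castRingHom ℝ) M
    rw [RingHom.mapMatrix_apply] at h5
    have h6 : ((M.det : ℤ) : ℝ) = 0 := by
      rw [show ((M.det : ℤ) : ℝ) = (Int.castRingHom ℝ) M.det from rfl, h5]
      exact hdetR
    exact_mod_cast h6
  have hmap : M.map (fun z : ℤ => (z : ZMod p)) =
      Matrix.vandermonde ![(xa : ZMod p), (xb : ZMod p), (xc : ZMod p), (xd : ZMod p)] := by
    funext i j
    fin_cases i <;> fin_cases j <;>
      simp [Matrix.vandermonde, hM, hA0, hA1, hA2, hB0, hB1, hB2, hC0, hC1, hC2,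
        hD0, hD1, hD2, cast_emod, Matrix.vecHead, Matrix.vecTail] <;> first | rfl | norm_num
  have hvand : (M.map (fun z : ℤ => (z : ZMod p))).det ≠ 0 := by
    rw [hmap, Matrix.det_vandermonde_ne_zero_iff]
    intro i j hij
    by_contra hne
    fin_cases i <;> fin_cases j <;> simp_all <;>
      first
        | exact (modp_inj hkp ha1 hak hb1 hbk hab) hij
        | exact (modp_inj hkp ha1 hak hc1 hck hac) hij
        | exact (modp_inj hkp ha1 hak hd1 hdk had) hij
        | exact (modp_inj hkp hb1 hbk ha1 hak (Ne.symm hab)) hij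
        | exact (modp_inj hkp hb1 hbk hc1 hck hbc) hij
        | exact (modp_inj hkp hb1 hbk hd1 hdk hbd) hij
        | exact (modp_inj hkp hc1 hck ha1 hak (Ne.symm hac)) hij
        | exact (modp_inj hkp hc1 hck hb1 hbk (Ne.symm hbc)) hij
        | exact (modp_inj hkp hc1 hck hd1 hdk hcd) hij
        | exact (modp_inj hkp hd1 hdk ha1 hak (Ne.symm had)) hij
        | exact (modp_inj hkp hd1 hdk hb1 hbk (Ne.symm hbd)) hij
        | exact (modp_inj hkp hd1 hdk hc1 hck (Ne.symm hcd)) hij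
  apply hvand
  have h7 := RingHom.map_det (Int.castRingHom (ZMod p)) M
  rw [RingHom.mapMatrix_apply] at h7
  rw [show (M.map (fun z : ℤ => (z : ZMod p))) = M.map (Int.castRingHom (ZMod p)) from rfl,
    ← h7, hdetZ]
  simp

lemma segCoord {A B : Fin 3 → ℤ} {q : Fin 3 → ℝ}
    (h : q ∈ segment ℝ (gridPt A) (gridPt B)) :
    ∃ a b : ℝ, 0 ≤ a ∧ 0 ≤ b ∧ a + b = 1 ∧ ∀ i, q i = a * A i + b * B i := by
  obtain ⟨a, b, ha, hb, hs, he⟩ := h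
  exact ⟨a, b, ha, hb, hs, fun i => by rw [← he]; simp [gridPt]⟩

lemma collinear_combo2 {xa ya xc yc xd yd c d : ℝ} (hs : c + d = 1)
    (h0 : xa = c*xc + d*xd) (h1 : ya = c*yc + d*yd) :
    (xc - xa) * (yd - ya) = (xd - xa) * (yc - ya) := by
  have hd : d = 1 - c := by linarith
  subst hd h0 h1
  ring

lemma shared_combo {xa ya xb yb xd yd : ℝ} {a b c d : ℝ} (hs1 : a + b = 1) (hs2 : c + d = 1)
    (h0 : a*xa + b*xb = c*xa + d*xd) (h1 : a*ya + b*yb = c*ya + d*yd)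
    (hba : xb ≠ xa) (hda : xd ≠ xa)
    (hnc : (xb - xa) * (yd - ya) ≠ (xd - xa) * (yb - ya)) : b = 0 ∧ d = 0 := by
  have ha : a = 1 - b := by linarith
  have hc : c = 1 - d := by linarith
  subst ha hc
  have e0 : b*(xb - xa) = d*(xd - xa) := by linear_combination h0
  have e1 : b*(yb - ya) = d*(yd - ya) := by linear_combination h1
  by_cases hb : b = 0
  · subst hb
    refine ⟨rfl, ?_⟩
    have e0' : d * (xd - xa) = 0 := by linarith [e0]
    rcases mul_eq_zero.1 e0' with h | h
    · exact h
    · exact absurd (sub_eq_zero.1 h) hda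
  · exfalso
    have hd : d ≠ 0 := by
      intro hd; subst hd
      have e0' : b * (xb - xa) = 0 := by linarith [e0]
      exact hb ((mul_eq_zero.1 e0').resolve_right (fun h => hba (sub_eq_zero.1 h)))
    apply hnc
    have key : b*d*((xb-xa)*(yd-ya) - (xd-xa)*(yb-ya)) = 0 := by
      linear_combination (d*(yd-ya))*e0 - (d*(xd-xa))*e1
    have h8 := (mul_eq_zero.1 key).resolve_left (by
      intro h9
      rcases mul_eq_zero.1 h9 with h | h
      · exact hb h
      · exact hd h)
    linarith [sub_eq_zero.1 h8]

end Aux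
set_option maxHeartbeats 4000000 in
lemma improper_drawing {V : Type} [Fintype V] (G : SimpleGraph V) {k n' : ℕ} (hk : 0 < k)
    (L : ImproperTrackLayout V G k) (hL : ∀ i : Fin k, {v : V | L.track v = i}.ncard ≤ n') :
    ∃ D : Drawing3D V G, D.InBox k (2 * k) (2 * k * n') := by
  classical
  obtain ⟨p, hpp, hkp, hp2k⟩ := Nat.exists_prime_lt_and_le_two_mul k hk.ne'
  have hppos : (0:ℤ) < (p:ℤ) := by exact_mod_cast hpp.pos
  set Xv : V → ℤ := fun v => ((L.track v : ℕ) : ℤ) + 1 with hXv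
  set rk : V → ℕ := fun v =>
    (Finset.univ.filter fun u => L.track u = L.track v ∧ L.pos u < L.pos v).card with hrk
  set P : V → Fin 3 → ℤ :=
    fun v => ![Xv v, Xv v ^ 2 % (p:ℤ), Xv v ^ 3 % (p:ℤ) + (p:ℤ) * rk v] with hP
  have hP0 : ∀ v, P v 0 = Xv v := fun v => rfl
  have hP1 : ∀ v, P v 1 = Xv v ^ 2 % (p:ℤ) := fun v => rfl
  have hP2 : ∀ v, P v 2 = Xv v ^ 3 % (p:ℤ) + (p:ℤ) * rk v := fun v => rfl
  have hX1 : ∀ v, 1 ≤ Xv v := fun v => by simp only [hXv]; omega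
  have hXk : ∀ v, Xv v ≤ (k:ℤ) := fun v => by
    have := (L.track v).isLt
    simp only [hXv]
    omega
  have hXtr : ∀ u v, Xv u = Xv v → L.track u = L.track v := by
    intro u v h
    simp only [hXv] at h
    exact Fin.ext (by omega)
  have hXtr' : ∀ u v, L.track u = L.track v → Xv u = Xv v := by
    intro u v h; simp only [hXv, h]
  have hXne : ∀ u v, L.track u ≠ L.track v → Xv u ≠ Xv v :=
    fun u v h h' => h (hXtr u v h')
  -- rank facts
  have hrkmono : ∀ u v, L.track u = L.track v → L.pos u < L.pos v → rk u < rk v := by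
    intro u v ht hp'
    apply Finset.card_lt_card
    rw [Finset.ssubset_iff_of_subset]
    · refine ⟨u, ?_, ?_⟩
      · simp [hrk, ht, hp']
      · simp [hrk]
    · intro w hw
      simp only [hrk, Finset.mem_filter, Finset.mem_univ, true_and] at hw ⊢
      exact ⟨hw.1.trans ht, hw.2.trans hp'⟩
  have hrk_iff : ∀ u v, L.track u = L.track v → (L.pos u < L.pos v ↔ rk u < rk v) := by
    intro u v ht
    constructor
    · exact hrkmono u v ht
    · intro h
      rcases lt_trichotomy (L.pos u) (L.pos v) with h' | h' | h'
      · exact h'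
      · exact absurd (L.inj u v ht h') (by rintro rfl; exact lt_irrefl _ h)
      · exact absurd (hrkmono v u ht.symm h') (by omega)
  have hrkinj : ∀ u v, L.track u = L.track v → rk u = rk v → u = v := by
    intro u v ht h
    rcases lt_trichotomy (L.pos u) (L.pos v) with h' | h' | h'
    · exact absurd (hrkmono u v ht h') (by omega)
    · exact L.inj u v ht h'
    · exact absurd (hrkmono v u ht.symm h') (by omega)
  have hrkbound : ∀ v, rk v + 1 ≤ n' := by
    intro v
    have h1 : rk v < (Finset.univ.filter fun u => L.track u = L.track v).card := by
      apply Finset.card_lt_card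
      rw [Finset.ssubset_iff_of_subset]
      · exact ⟨v, by simp, by simp [hrk]⟩
      · intro w hw
        simp only [hrk, Finset.mem_filter, Finset.mem_univ, true_and] at hw ⊢
        exact hw.1
    have h2 : (Finset.univ.filter fun u => L.track u = L.track v).card
        = {u : V | L.track u = L.track v}.ncard := by
      rw [Set.ncard_eq_toFinset_card']
      congr 1
      ext u
      simp
    have h3 := hL (L.track v)
    rw [h2] at h1
    omega
  -- z-coordinate facts
  have hzc_iff : ∀ u v, L.track u = L.track v → (P u 2 < P v 2 ↔ L.pos u < L.pos v) := by
    intro u v ht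
    rw [hP2, hP2, hXtr' u v ht, hrk_iff u v ht]
    constructor
    · intro h
      by_contra h'
      push_neg at h'
      have : (rk v : ℤ) ≤ rk u := by exact_mod_cast h'
      nlinarith
    · intro h
      have : (rk u : ℤ) + 1 ≤ rk v := by exact_mod_cast h
      nlinarith
  have hzc_inj : ∀ u v, L.track u = L.track v → P u 2 = P v 2 → u = v := by
    intro u v ht h
    apply hrkinj u v ht
    rw [hP2, hP2, hXtr' u v ht] at h
    have : (rk u : ℤ) = rk v := by
      have := mul_left_cancel₀ (ne_of_gt hppos) (by linarith : (p:ℤ) * rk u = (p:ℤ) * rk v)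
      exact this
    exact_mod_cast this
  have hPinj : Function.Injective P := by
    intro u v h
    have h0 := congrFun h 0
    have h2 := congrFun h 2
    rw [hP0, hP0] at h0
    exact hzc_inj u v (hXtr u v h0) (by rw [h2])
  -- the "between on a track" lemma
  have dir : ∀ v w x : V, G.Adj v w → L.track v = L.track w → L.track x = L.track v →
      P v 2 ≤ P x 2 → P x 2 ≤ P w 2 → x = v ∨ x = w := by
    intro v w x ha ht htx h1 h2
    rcases eq_or_lt_of_le h1 with he | hlt
    · exact Or.inl (hzc_inj x v htx he.symm)
    rcases eq_or_lt_of_le h2 with he | hlt2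
    · exact Or.inr (hzc_inj x w (htx.trans ht) he)
    exfalso
    exact L.consecutive v w x ha ht htx
      ((hzc_iff v x (htx.symm)).1 hlt) ((hzc_iff x w (htx.trans ht)).1 hlt2)
  
  -- more coordinate facts
  have hY : ∀ u v, L.track u = L.track v → P u 1 = P v 1 := by
    intro u v h; rw [hP1, hP1, hXtr' u v h]
  have hzmod : ∀ v : V, ((P v 2 : ℤ) : ZMod p) = ((Xv v : ℤ) : ZMod p)^3 := by
    intro v
    have hz0 : (((p:ℤ)) : ZMod p) = 0 := by push_cast; exact ZMod.natCast_self p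
    rw [hP2, Int.cast_add, Int.cast_mul, cast_emod, hz0, zero_mul, add_zero]
    push_cast; ring
  have gridInj : ∀ u1 u2 : V, gridPt (P u1) = gridPt (P u2) → u1 = u2 := by
    intro u1 u2 h
    apply hPinj
    funext i
    have h' : ((P u1 i : ℤ):ℝ) = ((P u2 i : ℤ):ℝ) := congrFun h i
    exact_mod_cast h'
  have qeqP : ∀ (q : Fin 3 → ℝ) (cα cβ : ℝ) (u1 u2 : V), cβ = 0 → cα + cβ = 1 →
      (∀ i, q i = cα * P u1 i + cβ * P u2 i) → q = gridPt (P u1) := by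
    intro q cα cβ u1 u2 h0 hs hq
    funext i
    rw [hq i, h0]
    have h1 : cα = 1 := by linarith
    rw [h1]
    simp [gridPt]
  have betweenReal : ∀ (v w x : V), G.Adj v w → L.track v = L.track w → L.track x = L.track v →
      ∀ (cα cβ : ℝ), 0 ≤ cα → 0 ≤ cβ → cα + cβ = 1 →
      ((P x 2 : ℤ):ℝ) = cα * P v 2 + cβ * P w 2 → x = v ∨ x = w := by
    intro v w x ha ht htx cα cβ h1 h2 hs hz
    have hα' : cα = 1 - cβ := by linarith
    subst hα'
    rcases le_total (P v 2) (P w 2) with h | h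
    · apply dir v w x ha ht htx
      · have hcc : ((P v 2:ℤ):ℝ) ≤ ((P w 2:ℤ):ℝ) := by exact_mod_cast h
        have hc : ((P v 2:ℤ):ℝ) ≤ ((P x 2:ℤ):ℝ) := by
          rw [hz]; nlinarith [mul_nonneg h2 (sub_nonneg.2 hcc)]
        exact_mod_cast hc
      · have hcc : ((P v 2:ℤ):ℝ) ≤ ((P w 2:ℤ):ℝ) := by exact_mod_cast h
        have hc : ((P x 2:ℤ):ℝ) ≤ ((P w 2:ℤ):ℝ) := by
          rw [hz]; nlinarith [mul_nonneg (by linarith : (0:ℝ) ≤ 1 - cβ) (sub_nonneg.2 hcc)]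
        exact_mod_cast hc
    · have h' := dir w v x ha.symm ht.symm (htx.trans ht) ?_ ?_
      · tauto
      · have hcc : ((P w 2:ℤ):ℝ) ≤ ((P v 2:ℤ):ℝ) := by exact_mod_cast h
        have hc : ((P w 2:ℤ):ℝ) ≤ ((P x 2:ℤ):ℝ) := by
          rw [hz]; nlinarith [mul_nonneg (by linarith : (0:ℝ) ≤ 1 - cβ) (sub_nonneg.2 hcc)]
        exact_mod_cast hc
      · have hcc : ((P w 2:ℤ):ℝ) ≤ ((P v 2:ℤ):ℝ) := by exact_mod_cast h
        have hc : ((P x 2:ℤ):ℝ) ≤ ((P v 2:ℤ):ℝ) := by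
          rw [hz]; nlinarith [mul_nonneg h2 (sub_nonneg.2 hcc)]
        exact_mod_cast hc
  -- sub-lemma: first edge intra-track, second edge inter-track
  have intraInter : ∀ (q : Fin 3 → ℝ) (v w x y : V) (cα cβ cγ cδ : ℝ),
      G.Adj v w → G.Adj x y → L.track v = L.track w → L.track x ≠ L.track y →
      0 ≤ cα → 0 ≤ cβ → cα + cβ = 1 → 0 ≤ cγ → 0 ≤ cδ → cγ + cδ = 1 →
      (∀ i, q i = cα * P v i + cβ * P w i) → (∀ i, q i = cγ * P x i + cδ * P y i) →
      (q = gridPt (P v) ∧ (v = x ∨ v = y)) ∨ (q = gridPt (P w) ∧ (w = x ∨ w = y)) := by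
    intro q v w x y cα cβ cγ cδ hvw hxy htvw htxy hα hβ hsαβ hγ hδ hsγδ hq1 hq2
    have hXw : Xv w = Xv v := hXtr' w v htvw.symm
    have e0 : cα * ((Xv v : ℤ):ℝ) + cβ * ((Xv v : ℤ):ℝ) = cγ * ((Xv x : ℤ):ℝ) + cδ * ((Xv y : ℤ):ℝ) := by
      have a := hq1 0
      have b := hq2 0
      rw [hP0, hP0, hXw] at a
      rw [hP0, hP0] at b
      rw [← a, b]
    by_cases hxv : L.track x = L.track v
    · have hXx : Xv x = Xv v := hXtr' x v hxv
      have hXy : Xv y ≠ Xv v := hXne y v (fun h => htxy (hxv.trans h.symm))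
      have hδ0 : cδ = 0 := by
        have h' : cδ * (((Xv y : ℤ):ℝ) - ((Xv v : ℤ):ℝ)) = 0 := by
          rw [hXx] at e0
          linear_combination -e0 + ((Xv v : ℤ):ℝ) * hsαβ - ((Xv v : ℤ):ℝ) * hsγδ
        rcases mul_eq_zero.1 h' with h | h
        · exact h
        · exact absurd (by exact_mod_cast sub_eq_zero.1 h : Xv y = Xv v) hXy
      have hqx : q = gridPt (P x) := qeqP q cγ cδ x y hδ0 hsγδ hq2
      have hz : ((P x 2 : ℤ):ℝ) = cα * P v 2 + cβ * P w 2 := by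
        have h' := hq1 2
        rw [hqx] at h'
        simpa [gridPt] using h'
      rcases betweenReal v w x hvw htvw hxv cα cβ hα hβ hsαβ hz with h | h
      · exact Or.inl ⟨by rw [hqx, h], Or.inl h.symm⟩
      · exact Or.inr ⟨by rw [hqx, h], Or.inl h.symm⟩
    · by_cases hyv : L.track y = L.track v
      · have hXy : Xv y = Xv v := hXtr' y v hyv
        have hXx : Xv x ≠ Xv v := hXne x v (fun h => htxy (h.trans hyv.symm))
        have hγ0 : cγ = 0 := by
          have h' : cγ * (((Xv x : ℤ):ℝ) - ((Xv v : ℤ):ℝ)) = 0 := by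
            rw [hXy] at e0
            linear_combination -e0 + ((Xv v : ℤ):ℝ) * hsαβ - ((Xv v : ℤ):ℝ) * hsγδ
          rcases mul_eq_zero.1 h' with h | h
          · exact h
          · exact absurd (by exact_mod_cast sub_eq_zero.1 h : Xv x = Xv v) hXx
        have hq2' : ∀ i, q i = cδ * P y i + cγ * P x i := fun i => by rw [hq2 i]; ring
        have hqy : q = gridPt (P y) := qeqP q cδ cγ y x hγ0 (by linarith) hq2'
        have hz : ((P y 2 : ℤ):ℝ) = cα * P v 2 + cβ * P w 2 := by
          have h' := hq1 2
          rw [hqy] at h'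
          simpa [gridPt] using h'
        rcases betweenReal v w y hvw htvw hyv cα cβ hα hβ hsαβ hz with h | h
        · exact Or.inl ⟨by rw [hqy, h], Or.inr h.symm⟩
        · exact Or.inr ⟨by rw [hqy, h], Or.inr h.symm⟩
      · exfalso
        have e0' : ((Xv v : ℤ):ℝ) = cγ * ((Xv x : ℤ):ℝ) + cδ * ((Xv y : ℤ):ℝ) := by
          linear_combination e0 - ((Xv v : ℤ):ℝ) * hsαβ
        have e1' : ((P v 1 : ℤ):ℝ) = cγ * ((P x 1 : ℤ):ℝ) + cδ * ((P y 1 : ℤ):ℝ) := by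
          have a := hq1 1
          have b := hq2 1
          rw [hY w v htvw.symm] at a
          have h' : cα * ((P v 1 : ℤ):ℝ) + cβ * ((P v 1 : ℤ):ℝ) = cγ * P x 1 + cδ * P y 1 := by
            rw [← a, b]
          linear_combination h' - ((P v 1 : ℤ):ℝ) * hsαβ
        have hcol := collinear_combo2 hsγδ e0' e1'
        have hint : (Xv x - Xv v) * (P y 1 - P v 1) = (Xv y - Xv v) * (P x 1 - P v 1) := by
          exact_mod_cast hcol
        rw [hP1, hP1, hP1] at hint
        exact noncoll hpp hkp (hX1 v) (hXk v) (hX1 x) (hXk x) (hX1 y) (hXk y)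
          (hXne v x (fun h => hxv h.symm)) (hXne v y (fun h => hyv h.symm)) (hXne x y htxy) hint
  -- sub-lemma: two inter-track edges sharing exactly the first column
  have sharedCol : ∀ (q : Fin 3 → ℝ) (v w x y : V) (cα cβ cγ cδ : ℝ),
      L.track v ≠ L.track w → L.track x ≠ L.track y → L.track v = L.track x →
      L.track w ≠ L.track y → cα + cβ = 1 → cγ + cδ = 1 →
      (∀ i, q i = cα * P v i + cβ * P w i) → (∀ i, q i = cγ * P x i + cδ * P y i) →
      cβ = 0 ∧ cδ = 0 := by
    intro q v w x y cα cβ cγ cδ htvw htxy htvx htwy hsαβ hsγδ hq1 hq2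
    have hXx : Xv x = Xv v := hXtr' x v htvx.symm
    have hYx : P x 1 = P v 1 := hY x v htvx.symm
    have e0 : cα * ((Xv v : ℤ):ℝ) + cβ * ((Xv w : ℤ):ℝ)
        = cγ * ((Xv v : ℤ):ℝ) + cδ * ((Xv y : ℤ):ℝ) := by
      have a := hq1 0
      have b := hq2 0
      rw [hP0, hP0] at a
      rw [hP0, hP0, hXx] at b
      rw [← a, b]
    have e1 : cα * ((P v 1 : ℤ):ℝ) + cβ * ((P w 1 : ℤ):ℝ)
        = cγ * ((P v 1 : ℤ):ℝ) + cδ * ((P y 1 : ℤ):ℝ) := by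
      have a := hq1 1
      have b := hq2 1
      rw [hYx] at b
      rw [← a, b]
    apply shared_combo hsαβ hsγδ e0 e1
    · have := hXne w v htvw.symm
      intro h; exact this (by exact_mod_cast h)
    · have hyv : Xv y ≠ Xv v := hXne y v (fun h => htxy (htvx.symm.trans h.symm))
      intro h; exact hyv (by exact_mod_cast h)
    · intro h
      have hint : (Xv w - Xv v) * (P y 1 - P v 1) = (Xv y - Xv v) * (P w 1 - P v 1) := by
        exact_mod_cast h
      rw [hP1, hP1, hP1] at hint
      exact noncoll hpp hkp (hX1 v) (hXk v) (hX1 w) (hXk w) (hX1 y) (hXk y)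
        (hXne v w htvw) (hXne v y (fun h' => htxy (htvx.symm.trans h')))
        (hXne w y htwy) hint

  -- sub-lemma: two edges on the same pair of tracks (same orientation)
  have samePair : ∀ (q : Fin 3 → ℝ) (v w x y : V) (cα cβ cγ cδ : ℝ),
      G.Adj v w → G.Adj x y → L.track v = L.track x → L.track w = L.track y →
      L.track v ≠ L.track w → ¬(v = x ∧ w = y) →
      0 ≤ cα → 0 ≤ cβ → cα + cβ = 1 → 0 ≤ cγ → 0 ≤ cδ → cγ + cδ = 1 →
      (∀ i, q i = cα * P v i + cβ * P w i) → (∀ i, q i = cγ * P x i + cδ * P y i) →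
      (q = gridPt (P v) ∧ v = x) ∨ (q = gridPt (P w) ∧ w = y) := by
    intro q v w x y cα cβ cγ cδ hvw hxy htvx htwy htvw hne hα hβ hsαβ hγ hδ hsγδ hq1 hq2
    have hXx : Xv x = Xv v := hXtr' x v htvx.symm
    have hXy : Xv y = Xv w := hXtr' y w htwy.symm
    have hXvw : ((Xv v : ℤ):ℝ) ≠ ((Xv w : ℤ):ℝ) := by
      have := hXne v w htvw
      intro h; exact this (by exact_mod_cast h)
    have e0 : cα * ((Xv v : ℤ):ℝ) + cβ * ((Xv w : ℤ):ℝ)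
        = cγ * ((Xv v : ℤ):ℝ) + cδ * ((Xv w : ℤ):ℝ) := by
      have a := hq1 0
      have b := hq2 0
      rw [hP0, hP0] at a
      rw [hP0, hP0, hXx, hXy] at b
      rw [← a, b]
    have hαγ : cα = cγ := by
      have h' : (cα - cγ) * (((Xv v : ℤ):ℝ) - ((Xv w : ℤ):ℝ)) = 0 := by
        linear_combination e0 - ((Xv w : ℤ):ℝ) * hsαβ + ((Xv w : ℤ):ℝ) * hsγδ
      rcases mul_eq_zero.1 h' with h | h
      · linarith [sub_eq_zero.1 h]
      · exact absurd (sub_eq_zero.1 h) hXvw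
    have hβδ : cβ = cδ := by linarith
    have e2 : cα * ((P v 2 : ℤ):ℝ) + cβ * ((P w 2 : ℤ):ℝ)
        = cα * ((P x 2 : ℤ):ℝ) + cβ * ((P y 2 : ℤ):ℝ) := by
      have a := hq1 2
      have b := hq2 2
      rw [← hαγ, ← hβδ] at b
      rw [← a, b]
    by_cases hvx : v = x
    · have hwy : w ≠ y := fun h => hne ⟨hvx, h⟩
      have hzwy : P w 2 ≠ P y 2 := fun h => hwy (hzc_inj w y htwy h)
      have hβ0 : cβ = 0 := by
        have h' : cβ * (((P y 2 : ℤ):ℝ) - ((P w 2 : ℤ):ℝ)) = 0 := by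
          rw [hvx] at e2
          linear_combination -e2
        rcases mul_eq_zero.1 h' with h | h
        · exact h
        · exact absurd (by exact_mod_cast sub_eq_zero.1 h : P y 2 = P w 2) (Ne.symm hzwy)
      exact Or.inl ⟨qeqP q cα cβ v w hβ0 hsαβ hq1, hvx⟩
    · by_cases hwy : w = y
      · have hzvx : P v 2 ≠ P x 2 := fun h => hvx (hzc_inj v x htvx h)
        have hα0 : cα = 0 := by
          have h' : cα * (((P v 2 : ℤ):ℝ) - ((P x 2 : ℤ):ℝ)) = 0 := by
            rw [hwy] at e2
            linear_combination e2
          rcases mul_eq_zero.1 h' with h | h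
          · exact h
          · exact absurd (by exact_mod_cast sub_eq_zero.1 h : P v 2 = P x 2) hzvx
        have hq1' : ∀ i, q i = cβ * P w i + cα * P v i := fun i => by rw [hq1 i]; ring
        exact Or.inr ⟨qeqP q cβ cα w v hα0 (by linarith) hq1', hwy⟩
      · exfalso
        have hzvx : P v 2 ≠ P x 2 := fun h => hvx (hzc_inj v x htvx h)
        have hzwy : P w 2 ≠ P y 2 := fun h => hwy (hzc_inj w y htwy h)
        have hαpos : 0 < cα := by
          rcases lt_or_eq_of_le hα with h | h
          · exact h
          · exfalso
            have hβ1 : cβ = 1 := by linarith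
            rw [← h] at e2
            apply hzwy
            have : ((P w 2 : ℤ):ℝ) = ((P y 2 : ℤ):ℝ) := by
              rw [hβ1] at e2; linarith [e2]
            exact_mod_cast this
        have hβpos : 0 < cβ := by
          rcases lt_or_eq_of_le hβ with h | h
          · exact h
          · exfalso
            have hα1 : cα = 1 := by linarith
            apply hzvx
            have : ((P v 2 : ℤ):ℝ) = ((P x 2 : ℤ):ℝ) := by
              rw [hα1, ← h] at e2; linarith [e2]
            exact_mod_cast this
        rcases lt_or_gt_of_ne hzvx with h | h
        · have hyw : P y 2 < P w 2 := by
            by_contra hcon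
            push_neg at hcon
            have r1 : ((P v 2 : ℤ):ℝ) < ((P x 2 : ℤ):ℝ) := by exact_mod_cast h
            have r2 : ((P w 2 : ℤ):ℝ) ≤ ((P y 2 : ℤ):ℝ) := by exact_mod_cast hcon
            nlinarith [mul_pos hαpos (sub_pos.2 r1), mul_nonneg hβpos.le (sub_nonneg.2 r2)]
          exact L.noX v w x y hvw hxy htvx htwy htvw
            ((hzc_iff v x htvx).1 h) ((hzc_iff y w htwy.symm).1 hyw)
        · have hwy' : P w 2 < P y 2 := by
            by_contra hcon
            push_neg at hcon
            have r1 : ((P x 2 : ℤ):ℝ) < ((P v 2 : ℤ):ℝ) := by exact_mod_cast h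
            have r2 : ((P y 2 : ℤ):ℝ) ≤ ((P w 2 : ℤ):ℝ) := by exact_mod_cast hcon
            nlinarith [mul_pos hαpos (sub_pos.2 r1), mul_nonneg hβpos.le (sub_nonneg.2 r2)]
          exact L.noX x y v w hxy hvw htvx.symm htwy.symm
            (fun hh => htvw (htvx.trans (hh.trans htwy.symm)))
            ((hzc_iff x v htvx.symm).1 h) ((hzc_iff w y htwy).1 hwy')
  -- sub-lemma: two intra-track edges in the same track sharing their first endpoint
  have sameColV : ∀ (q : Fin 3 → ℝ) (v w y : V) (cα cβ cγ cδ : ℝ),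
      G.Adj v w → G.Adj v y → L.track v = L.track w → L.track y = L.track v →
      w ≠ y → 0 ≤ cα → 0 ≤ cβ → cα + cβ = 1 → 0 ≤ cγ → 0 ≤ cδ → cγ + cδ = 1 →
      (∀ i, q i = cα * P v i + cβ * P w i) → (∀ i, q i = cγ * P v i + cδ * P y i) →
      q = gridPt (P v) := by
    intro q v w y cα cβ cγ cδ hvw hvy htvw htyv hwy hα hβ hsαβ hγ hδ hsγδ hq1 hq2
    have hwv : w ≠ v := hvw.ne'
    have hyv : y ≠ v := hvy.ne'
    have hXw : Xv w = Xv v := hXtr' w v htvw.symm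
    have hXy : Xv y = Xv v := hXtr' y v htyv
    have hYw : P w 1 = P v 1 := hY w v htvw.symm
    have hYy : P y 1 = P v 1 := hY y v htyv
    have hposw : L.pos w ≠ L.pos v := fun h => hwv (L.inj w v htvw.symm h)
    have hposy : L.pos y ≠ L.pos v := fun h => hyv (L.inj y v htyv h)
    have hα' : cα = 1 - cβ := by linarith
    have hγ' : cγ = 1 - cδ := by linarith
    have hq2eq : q 2 = ((P v 2 : ℤ):ℝ) := by
      rcases lt_or_gt_of_ne hposw with hw | hw <;> rcases lt_or_gt_of_ne hposy with hy | hy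
      · exfalso
        rcases lt_trichotomy (L.pos w) (L.pos y) with h | h | h
        · exact L.consecutive w v y hvw.symm htvw.symm (htyv.trans htvw) h hy
        · exact hwy (L.inj w y (htvw.symm.trans htyv.symm) h)
        · exact L.consecutive y v w hvy.symm htyv (htvw.symm.trans htyv.symm) h hw
      · -- pos w < pos v < pos y : q 2 ≤ z v and q 2 ≥ z v
        have hzw : P w 2 < P v 2 := (hzc_iff w v htvw.symm).2 hw
        have hzy : P v 2 < P y 2 := (hzc_iff v y htyv.symm).2 hy
        have r1 : ((P w 2 : ℤ):ℝ) ≤ ((P v 2 : ℤ):ℝ) := by exact_mod_cast hzw.le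
        have r2 : ((P v 2 : ℤ):ℝ) ≤ ((P y 2 : ℤ):ℝ) := by exact_mod_cast hzy.le
        have u1 := hq1 2
        have u2 := hq2 2
        have hup : q 2 ≤ ((P v 2 : ℤ):ℝ) := by
          rw [u1, hα']; linarith [mul_nonneg hβ (sub_nonneg.2 r1)]
        have hdown : ((P v 2 : ℤ):ℝ) ≤ q 2 := by
          rw [u2, hγ']; linarith [mul_nonneg hδ (sub_nonneg.2 r2)]
        linarith
      · have hzw : P v 2 < P w 2 := (hzc_iff v w htvw).2 hw
        have hzy : P y 2 < P v 2 := (hzc_iff y v htyv).2 hy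
        have r1 : ((P v 2 : ℤ):ℝ) ≤ ((P w 2 : ℤ):ℝ) := by exact_mod_cast hzw.le
        have r2 : ((P y 2 : ℤ):ℝ) ≤ ((P v 2 : ℤ):ℝ) := by exact_mod_cast hzy.le
        have u1 := hq1 2
        have u2 := hq2 2
        have hdown : ((P v 2 : ℤ):ℝ) ≤ q 2 := by
          rw [u1, hα']; linarith [mul_nonneg hβ (sub_nonneg.2 r1)]
        have hup : q 2 ≤ ((P v 2 : ℤ):ℝ) := by
          rw [u2, hγ']; linarith [mul_nonneg hδ (sub_nonneg.2 r2)]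
        linarith
      · exfalso
        rcases lt_trichotomy (L.pos w) (L.pos y) with h | h | h
        · exact L.consecutive v y w hvy htyv.symm htvw.symm hw h
        · exact hwy (L.inj w y (htvw.symm.trans htyv.symm) h)
        · exact L.consecutive v w y hvw htvw htyv hy h
    funext i
    fin_cases i
    · show q 0 = ((P v 0 : ℤ):ℝ)
      rw [hq1 0, hP0, hP0, hXw]
      linear_combination ((Xv v : ℤ):ℝ) * hsαβ
    · show q 1 = ((P v 1 : ℤ):ℝ)
      rw [hq1 1, hYw]
      linear_combination ((P v 1 : ℤ):ℝ) * hsαβ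
    · show q 2 = ((P v 2 : ℤ):ℝ)
      exact hq2eq
  -- dispatcher for two intra-track edges in a common track
  have sameColMain : ∀ (q : Fin 3 → ℝ) (v w x y : V) (cα cβ cγ cδ : ℝ),
      G.Adj v w → G.Adj x y → L.track v = L.track w → L.track x = L.track y →
      L.track v = L.track x → ¬((x = v ∧ y = w) ∨ (x = w ∧ y = v)) →
      0 ≤ cα → 0 ≤ cβ → cα + cβ = 1 → 0 ≤ cγ → 0 ≤ cδ → cγ + cδ = 1 →
      (∀ i, q i = cα * P v i + cβ * P w i) → (∀ i, q i = cγ * P x i + cδ * P y i) →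
      (x = v ∨ x = w ∨ y = v ∨ y = w) →
      (q = gridPt (P v) ∧ (v = x ∨ v = y)) ∨ (q = gridPt (P w) ∧ (w = x ∨ w = y)) := by
    intro q v w x y cα cβ cγ cδ hvw hxy htvw htxy htvx hne hα hβ hsαβ hγ hδ hsγδ hq1 hq2 hcase
    rcases hcase with hxv | hxw | hyv | hyw
    · -- x = v
      have hwy : w ≠ y := fun h => hne (Or.inl ⟨hxv, h.symm⟩)
      have hq2' : ∀ i, q i = cγ * P v i + cδ * P y i := fun i => by rw [hq2 i, hxv]
      have hAdj : G.Adj v y := by rw [← hxv]; exact hxy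
      have := sameColV q v w y cα cβ cγ cδ hvw hAdj htvw
        (by rw [← hxv]; exact htxy.symm : L.track y = L.track v) hwy hα hβ hsαβ hγ hδ hsγδ hq1 hq2'
      exact Or.inl ⟨this, Or.inl hxv.symm⟩
    · -- x = w
      have hvy : v ≠ y := fun h => hne (Or.inr ⟨hxw, h.symm⟩)
      have hq1' : ∀ i, q i = cβ * P w i + cα * P v i := fun i => by rw [hq1 i]; ring
      have hq2' : ∀ i, q i = cγ * P w i + cδ * P y i := fun i => by rw [hq2 i, hxw]
      have hAdj : G.Adj w y := by rw [← hxw]; exact hxy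
      have := sameColV q w v y cβ cα cγ cδ hvw.symm hAdj htvw.symm
        (by rw [← hxw]; exact htxy.symm : L.track y = L.track w) hvy hβ hα (by linarith)
        hγ hδ hsγδ hq1' hq2'
      exact Or.inr ⟨this, Or.inl hxw.symm⟩
    · -- y = v
      have hwx : w ≠ x := fun h => hne (Or.inr ⟨h.symm, hyv⟩)
      have hq2' : ∀ i, q i = cδ * P v i + cγ * P x i := fun i => by rw [hq2 i, hyv]; ring
      have hAdj : G.Adj v x := by rw [← hyv]; exact hxy.symm
      have := sameColV q v w x cα cβ cδ cγ hvw hAdj htvw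
        ((htvx : L.track v = L.track x).symm) hwx hα hβ hsαβ hδ hγ (by linarith)
        hq1 hq2'
      exact Or.inl ⟨this, Or.inr hyv.symm⟩
    · -- y = w
      have hvx : v ≠ x := fun h => hne (Or.inl ⟨h.symm, hyw⟩)
      have hq1' : ∀ i, q i = cβ * P w i + cα * P v i := fun i => by rw [hq1 i]; ring
      have hq2' : ∀ i, q i = cδ * P w i + cγ * P x i := fun i => by rw [hq2 i, hyw]; ring
      have hAdj : G.Adj w x := by rw [← hyw]; exact hxy.symm
      have := sameColV q w v x cβ cα cδ cγ hvw.symm hAdj htvw.symm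
        (htvx.symm.trans htvw : L.track x = L.track w) hvx hβ hα (by linarith)
        hδ hγ (by linarith) hq1' hq2'
      exact Or.inr ⟨this, Or.inr hyw.symm⟩
  -- assemble the drawing
  refine ⟨⟨P, hPinj, ?_, ?_⟩, ?_⟩
  · -- vertexDisjoint
    intro v w x hadj hmem
    obtain ⟨cα, cβ, hα, hβ, hs, hq⟩ := segCoord hmem
    have hqq : ∀ i, ((P x i : ℤ):ℝ) = cα * P v i + cβ * P w i := fun i => hq i
    by_cases htr : L.track v = L.track w
    · have hXw : Xv w = Xv v := hXtr' w v htr.symm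
      have hXx : Xv x = Xv v := by
        have h0 := hqq 0
        rw [hP0, hP0, hP0, hXw] at h0
        have h1 : ((Xv x : ℤ):ℝ) = ((Xv v : ℤ):ℝ) := by
          linear_combination h0 + ((Xv v : ℤ):ℝ) * hs
        exact_mod_cast h1
      exact betweenReal v w x hadj htr (hXtr x v hXx) cα cβ hα hβ hs (hqq 2)
    · by_cases htxv : L.track x = L.track v
      · left
        have hβ0 : cβ = 0 := by
          have h0 := hqq 0
          rw [hP0, hP0, hP0, hXtr' x v htxv] at h0
          have h' : cβ * (((Xv w : ℤ):ℝ) - ((Xv v : ℤ):ℝ)) = 0 := by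
            linear_combination -h0 - ((Xv v : ℤ):ℝ) * hs
          rcases mul_eq_zero.1 h' with h | h
          · exact h
          · exact absurd (by exact_mod_cast sub_eq_zero.1 h : Xv w = Xv v)
              (hXne w v (fun hh => htr hh.symm))
        exact gridInj x v (qeqP (gridPt (P x)) cα cβ v w hβ0 hs hq)
      · by_cases htxw : L.track x = L.track w
        · right
          have hα0 : cα = 0 := by
            have h0 := hqq 0
            rw [hP0, hP0, hP0, hXtr' x w htxw] at h0
            have h' : cα * (((Xv v : ℤ):ℝ) - ((Xv w : ℤ):ℝ)) = 0 := by
              linear_combination -h0 - ((Xv w : ℤ):ℝ) * hs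
            rcases mul_eq_zero.1 h' with h | h
            · exact h
            · exact absurd (by exact_mod_cast sub_eq_zero.1 h : Xv v = Xv w) (hXne v w htr)
          have hq' : ∀ i, gridPt (P x) i = cβ * P w i + cα * P v i := fun i => by
            rw [hq i]; ring
          exact gridInj x w (qeqP (gridPt (P x)) cβ cα w v hα0 (by linarith) hq')
        · exfalso
          have h0 := hqq 0
          rw [hP0, hP0, hP0] at h0
          have h1 := hqq 1
          have hcol := collinear_combo2 hs h0 h1
          have hint : (Xv v - Xv x) * (P w 1 - P x 1) = (Xv w - Xv x) * (P v 1 - P x 1) := by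
            exact_mod_cast hcol
          rw [hP1, hP1, hP1] at hint
          exact noncoll hpp hkp (hX1 x) (hXk x) (hX1 v) (hXk v) (hX1 w) (hXk w)
            (hXne x v htxv) (hXne x w htxw) (hXne v w htr) hint
  · -- edgesDisjoint
    intro v w x y hvw hxy hne q hq1m hq2m
    obtain ⟨cα, cβ, hα, hβ, hsαβ, hq1⟩ := segCoord hq1m
    obtain ⟨cγ, cδ, hγ, hδ, hsγδ, hq2⟩ := segCoord hq2m
    by_cases htvw : L.track v = L.track w
    · by_cases htxy : L.track x = L.track y
      · by_cases htvx : L.track v = L.track x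
        · -- all four vertices in a common track
          apply sameColMain q v w x y cα cβ cγ cδ hvw hxy htvw htxy htvx hne
            hα hβ hsαβ hγ hδ hsγδ hq1 hq2
          -- find a shared endpoint via the interval argument
          have hα' : cα = 1 - cβ := by linarith
          have hγ' : cγ = 1 - cδ := by linarith
          have u1 : q 2 = (1 - cβ) * ((P v 2 : ℤ):ℝ) + cβ * ((P w 2 : ℤ):ℝ) := by
            rw [hq1 2, hα']
          have u2 : q 2 = (1 - cδ) * ((P x 2 : ℤ):ℝ) + cδ * ((P y 2 : ℤ):ℝ) := by
            rw [hq2 2, hγ']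
          have htxv : L.track x = L.track v := htvx.symm
          have htyv : L.track y = L.track v := htxy.symm.trans htvx.symm
          rcases le_total (P v 2) (P w 2) with h1 | h1 <;>
            rcases le_total (P x 2) (P y 2) with h2 | h2
          · have r1 : ((P v 2 : ℤ):ℝ) ≤ ((P w 2 : ℤ):ℝ) := by exact_mod_cast h1
            have r2 : ((P x 2 : ℤ):ℝ) ≤ ((P y 2 : ℤ):ℝ) := by exact_mod_cast h2
            have c1 : ((P v 2 : ℤ):ℝ) ≤ q 2 := by
              rw [u1]; nlinarith [mul_nonneg hβ (sub_nonneg.2 r1)]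
            have c2 : q 2 ≤ ((P w 2 : ℤ):ℝ) := by
              rw [u1]; nlinarith [mul_nonneg hβ (sub_nonneg.2 r1), mul_nonneg hα (sub_nonneg.2 r1)]
            have c3 : ((P x 2 : ℤ):ℝ) ≤ q 2 := by
              rw [u2]; nlinarith [mul_nonneg hδ (sub_nonneg.2 r2)]
            have c4 : q 2 ≤ ((P y 2 : ℤ):ℝ) := by
              rw [u2]; nlinarith [mul_nonneg hδ (sub_nonneg.2 r2), mul_nonneg hγ (sub_nonneg.2 r2)]
            rcases le_total (P v 2) (P x 2) with h3 | h3
            · have h4 : P x 2 ≤ P w 2 := by exact_mod_cast (c3.trans c2)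
              rcases dir v w x hvw htvw htxv h3 h4 with h | h
              · exact Or.inl h
              · exact Or.inr (Or.inl h)
            · have h4 : P v 2 ≤ P y 2 := by exact_mod_cast (c1.trans c4)
              rcases dir x y v hxy htxy htvx h3 h4 with h | h
              · exact Or.inl h.symm
              · exact Or.inr (Or.inr (Or.inl h.symm))
          · have r1 : ((P v 2 : ℤ):ℝ) ≤ ((P w 2 : ℤ):ℝ) := by exact_mod_cast h1
            have r2 : ((P y 2 : ℤ):ℝ) ≤ ((P x 2 : ℤ):ℝ) := by exact_mod_cast h2
            have c1 : ((P v 2 : ℤ):ℝ) ≤ q 2 := by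
              rw [u1]; nlinarith [mul_nonneg hβ (sub_nonneg.2 r1)]
            have c2 : q 2 ≤ ((P w 2 : ℤ):ℝ) := by
              rw [u1]; nlinarith [mul_nonneg hβ (sub_nonneg.2 r1), mul_nonneg hα (sub_nonneg.2 r1)]
            have c3 : ((P y 2 : ℤ):ℝ) ≤ q 2 := by
              rw [u2]; nlinarith [mul_nonneg hδ (sub_nonneg.2 r2), mul_nonneg hγ (sub_nonneg.2 r2)]
            have c4 : q 2 ≤ ((P x 2 : ℤ):ℝ) := by
              rw [u2]; nlinarith [mul_nonneg hδ (sub_nonneg.2 r2)]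
            rcases le_total (P v 2) (P y 2) with h3 | h3
            · have h4 : P y 2 ≤ P w 2 := by exact_mod_cast (c3.trans c2)
              rcases dir v w y hvw htvw htyv h3 h4 with h | h
              · exact Or.inr (Or.inr (Or.inl h))
              · exact Or.inr (Or.inr (Or.inr h))
            · have h4 : P v 2 ≤ P x 2 := by exact_mod_cast (c1.trans c4)
              rcases dir y x v hxy.symm htxy.symm (htvx.trans htxy) h3 h4 with h | h
              · exact Or.inr (Or.inr (Or.inl h.symm))
              · exact Or.inl h.symm
          · have r1 : ((P w 2 : ℤ):ℝ) ≤ ((P v 2 : ℤ):ℝ) := by exact_mod_cast h1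
            have r2 : ((P x 2 : ℤ):ℝ) ≤ ((P y 2 : ℤ):ℝ) := by exact_mod_cast h2
            have c1 : ((P w 2 : ℤ):ℝ) ≤ q 2 := by
              rw [u1]; nlinarith [mul_nonneg hβ (sub_nonneg.2 r1), mul_nonneg hα (sub_nonneg.2 r1)]
            have c2 : q 2 ≤ ((P v 2 : ℤ):ℝ) := by
              rw [u1]; nlinarith [mul_nonneg hβ (sub_nonneg.2 r1)]
            have c3 : ((P x 2 : ℤ):ℝ) ≤ q 2 := by
              rw [u2]; nlinarith [mul_nonneg hδ (sub_nonneg.2 r2)]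
            have c4 : q 2 ≤ ((P y 2 : ℤ):ℝ) := by
              rw [u2]; nlinarith [mul_nonneg hδ (sub_nonneg.2 r2), mul_nonneg hγ (sub_nonneg.2 r2)]
            rcases le_total (P w 2) (P x 2) with h3 | h3
            · have h4 : P x 2 ≤ P v 2 := by exact_mod_cast (c3.trans c2)
              rcases dir w v x hvw.symm htvw.symm (htxv.trans htvw) h3 h4 with h | h
              · exact Or.inr (Or.inl h)
              · exact Or.inl h
            · have h4 : P w 2 ≤ P y 2 := by exact_mod_cast (c1.trans c4)
              rcases dir x y w hxy htxy (htxv.trans htvw).symm h3 h4 with h | h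
              · exact Or.inr (Or.inl h.symm)
              · exact Or.inr (Or.inr (Or.inr h.symm))
          · have r1 : ((P w 2 : ℤ):ℝ) ≤ ((P v 2 : ℤ):ℝ) := by exact_mod_cast h1
            have r2 : ((P y 2 : ℤ):ℝ) ≤ ((P x 2 : ℤ):ℝ) := by exact_mod_cast h2
            have c1 : ((P w 2 : ℤ):ℝ) ≤ q 2 := by
              rw [u1]; nlinarith [mul_nonneg hβ (sub_nonneg.2 r1), mul_nonneg hα (sub_nonneg.2 r1)]
            have c2 : q 2 ≤ ((P v 2 : ℤ):ℝ) := by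
              rw [u1]; nlinarith [mul_nonneg hβ (sub_nonneg.2 r1)]
            have c3 : ((P y 2 : ℤ):ℝ) ≤ q 2 := by
              rw [u2]; nlinarith [mul_nonneg hδ (sub_nonneg.2 r2), mul_nonneg hγ (sub_nonneg.2 r2)]
            have c4 : q 2 ≤ ((P x 2 : ℤ):ℝ) := by
              rw [u2]; nlinarith [mul_nonneg hδ (sub_nonneg.2 r2)]
            rcases le_total (P w 2) (P y 2) with h3 | h3
            · have h4 : P y 2 ≤ P v 2 := by exact_mod_cast (c3.trans c2)
              rcases dir w v y hvw.symm htvw.symm (htyv.trans htvw) h3 h4 with h | h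
              · exact Or.inr (Or.inr (Or.inr h))
              · exact Or.inr (Or.inr (Or.inl h))
            · have h4 : P w 2 ≤ P x 2 := by exact_mod_cast (c1.trans c4)
              rcases dir y x w hxy.symm htxy.symm ((htxv.trans htvw).symm.trans htxy) h3 h4 with h | h
              · exact Or.inr (Or.inr (Or.inr h.symm))
              · exact Or.inr (Or.inl h.symm)
        · exfalso
          have e0 : ((Xv v : ℤ):ℝ) = ((Xv x : ℤ):ℝ) := by
            have a := hq1 0
            have b := hq2 0
            rw [hP0, hP0, hXtr' w v htvw.symm] at a
            rw [hP0, hP0, hXtr' y x htxy.symm] at b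
            have h' : cα * ((Xv v : ℤ):ℝ) + cβ * ((Xv v : ℤ):ℝ)
                = cγ * ((Xv x : ℤ):ℝ) + cδ * ((Xv x : ℤ):ℝ) := by rw [← a, b]
            linear_combination h' - ((Xv v : ℤ):ℝ) * hsαβ + ((Xv x : ℤ):ℝ) * hsγδ
          exact hXne v x htvx (by exact_mod_cast e0)
      · exact intraInter q v w x y cα cβ cγ cδ hvw hxy htvw htxy hα hβ hsαβ hγ hδ hsγδ hq1 hq2
    · by_cases htxy : L.track x = L.track y
      · rcases intraInter q x y v w cγ cδ cα cβ hxy hvw htxy htvw hγ hδ hsγδ hα hβ hsαβ hq2 hq1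
          with ⟨hqe, h'⟩ | ⟨hqe, h'⟩
        · rcases h' with h'' | h''
          · exact Or.inl ⟨by rw [hqe, h''], Or.inl h''.symm⟩
          · exact Or.inr ⟨by rw [hqe, h''], Or.inl h''.symm⟩
        · rcases h' with h'' | h''
          · exact Or.inl ⟨by rw [hqe, h''], Or.inr h''.symm⟩
          · exact Or.inr ⟨by rw [hqe, h''], Or.inr h''.symm⟩
      · by_cases htvx : L.track v = L.track x
        · by_cases htwy : L.track w = L.track y
          · have hne' : ¬(v = x ∧ w = y) := fun ⟨ha, hb⟩ => hne (Or.inl ⟨ha.symm, hb.symm⟩)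
            rcases samePair q v w x y cα cβ cγ cδ hvw hxy htvx htwy htvw hne'
              hα hβ hsαβ hγ hδ hsγδ hq1 hq2 with ⟨ha, hb⟩ | ⟨ha, hb⟩
            · exact Or.inl ⟨ha, Or.inl hb⟩
            · exact Or.inr ⟨ha, Or.inr hb⟩
          · obtain ⟨hβ0, hδ0⟩ := sharedCol q v w x y cα cβ cγ cδ htvw htxy htvx htwy
              hsαβ hsγδ hq1 hq2
            have hqv : q = gridPt (P v) := qeqP q cα cβ v w hβ0 hsαβ hq1
            have hqx : q = gridPt (P x) := qeqP q cγ cδ x y hδ0 hsγδ hq2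
            exact Or.inl ⟨hqv, Or.inl (gridInj v x (hqv.symm.trans hqx))⟩
        · by_cases htvy : L.track v = L.track y
          · by_cases htwx : L.track w = L.track x
            · have hq2' : ∀ i, q i = cδ * P y i + cγ * P x i := fun i => by rw [hq2 i]; ring
              have hne' : ¬(v = y ∧ w = x) := fun ⟨ha, hb⟩ => hne (Or.inr ⟨hb.symm, ha.symm⟩)
              rcases samePair q v w y x cα cβ cδ cγ hvw hxy.symm htvy htwx htvw hne'
                hα hβ hsαβ hδ hγ (by linarith) hq1 hq2' with ⟨ha, hb⟩ | ⟨ha, hb⟩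
              · exact Or.inl ⟨ha, Or.inr hb⟩
              · exact Or.inr ⟨ha, Or.inl hb⟩
            · have hq2' : ∀ i, q i = cδ * P y i + cγ * P x i := fun i => by rw [hq2 i]; ring
              obtain ⟨hβ0, hγ0⟩ := sharedCol q v w y x cα cβ cδ cγ htvw
                (fun h => htxy h.symm) htvy htwx hsαβ (by linarith) hq1 hq2'
              have hqv : q = gridPt (P v) := qeqP q cα cβ v w hβ0 hsαβ hq1
              have hqy : q = gridPt (P y) := qeqP q cδ cγ y x hγ0 (by linarith) hq2'
              exact Or.inl ⟨hqv, Or.inr (gridInj v y (hqv.symm.trans hqy))⟩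
          · by_cases htwx : L.track w = L.track x
            · have hq1' : ∀ i, q i = cβ * P w i + cα * P v i := fun i => by rw [hq1 i]; ring
              obtain ⟨hα0, hδ0⟩ := sharedCol q w v x y cβ cα cγ cδ
                (fun h => htvw h.symm) htxy htwx htvy (by linarith) hsγδ hq1' hq2
              have hqw : q = gridPt (P w) := qeqP q cβ cα w v hα0 (by linarith) hq1'
              have hqx : q = gridPt (P x) := qeqP q cγ cδ x y hδ0 hsγδ hq2
              exact Or.inr ⟨hqw, Or.inl (gridInj w x (hqw.symm.trans hqx))⟩
            · by_cases htwy : L.track w = L.track y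
              · have hq1' : ∀ i, q i = cβ * P w i + cα * P v i := fun i => by rw [hq1 i]; ring
                have hq2' : ∀ i, q i = cδ * P y i + cγ * P x i := fun i => by rw [hq2 i]; ring
                obtain ⟨hα0, hγ0⟩ := sharedCol q w v y x cβ cα cδ cγ
                  (fun h => htvw h.symm) (fun h => htxy h.symm) htwy htvx
                  (by linarith) (by linarith) hq1' hq2'
                have hqw : q = gridPt (P w) := qeqP q cβ cα w v hα0 (by linarith) hq1'
                have hqy : q = gridPt (P y) := qeqP q cδ cγ y x hγ0 (by linarith) hq2'
                exact Or.inr ⟨hqw, Or.inr (gridInj w y (hqw.symm.trans hqy))⟩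
              · exfalso
                exact vandFour hpp hkp (hX1 v) (hXk v) (hX1 w) (hXk w) (hX1 x) (hXk x)
                  (hX1 y) (hXk y)
                  (hXne v w htvw) (hXne v x htvx) (hXne v y htvy)
                  (hXne w x htwx) (hXne w y htwy) (hXne x y htxy)
                  (hP0 v) (hP1 v) (hzmod v) (hP0 w) (hP1 w) (hzmod w)
                  (hP0 x) (hP1 x) (hzmod x) (hP0 y) (hP1 y) (hzmod y)
                  hsαβ hsγδ (fun i => (hq1 i).symm.trans (hq2 i))
  · -- InBox
    refine ⟨![1, 0, 0], fun v => ?_⟩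
    have hb0 : (1:ℤ) ≤ P v 0 ∧ P v 0 < 1 + (k:ℤ) := by
      rw [hP0]
      exact ⟨hX1 v, by have := hXk v; omega⟩
    have hmod1 : 0 ≤ Xv v ^ 2 % (p:ℤ) := Int.emod_nonneg _ (ne_of_gt hppos)
    have hmod1' : Xv v ^ 2 % (p:ℤ) < p := Int.emod_lt_of_pos _ hppos
    have hmod2 : 0 ≤ Xv v ^ 3 % (p:ℤ) := Int.emod_nonneg _ (ne_of_gt hppos)
    have hmod2' : Xv v ^ 3 % (p:ℤ) < p := Int.emod_lt_of_pos _ hppos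
    have hp2k' : (p:ℤ) ≤ 2 * k := by exact_mod_cast hp2k
    have hb1 : (0:ℤ) ≤ P v 1 ∧ P v 1 < 0 + (2 * k : ℕ) := by
      rw [hP1]
      constructor
      · exact hmod1
      · push_cast; omega
    have hb2 : (0:ℤ) ≤ P v 2 ∧ P v 2 < 0 + (2 * k * n' : ℕ) := by
      rw [hP2]
      have hr : (rk v : ℤ) + 1 ≤ (n' : ℤ) := by exact_mod_cast hrkbound v
      have hrpos : (0:ℤ) ≤ (rk v : ℤ) := Int.natCast_nonneg _
      constructor
      · have := mul_nonneg (le_of_lt hppos) hrpos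
        linarith
      · have step1 : Xv v ^ 3 % (p:ℤ) + (p:ℤ) * rk v < (p:ℤ) * ((rk v : ℤ) + 1) := by
          nlinarith
        have step2 : (p:ℤ) * ((rk v : ℤ) + 1) ≤ (p:ℤ) * n' :=
          mul_le_mul_of_nonneg_left hr (le_of_lt hppos)
        have step3 : (p:ℤ) * n' ≤ (2 * k : ℤ) * n' :=
          mul_le_mul_of_nonneg_right hp2k' (Int.natCast_nonneg _)
        push_cast
        push_cast at step1 step2 step3
        linarith
    have e0 : (![1, 0, 0] : Fin 3 → ℤ) 0 = 1 := rfl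
    have e1 : (![1, 0, 0] : Fin 3 → ℤ) 1 = 0 := rfl
    have e2 : (![1, 0, 0] : Fin 3 → ℤ) 2 = 0 := rfl
    rw [e0, e1, e2]
    exact ⟨hb0.1, hb0.2, hb1.1, by simpa using hb1.2, hb2.1, by simpa using hb2.2⟩
/-- If a graph `G` has a (possibly improper) `k`-track layout in
which every track contains at most `n'` vertices, then `G` has a
`k × 2k × (2k⬝n')` three-dimensional drawing. -/
theorem track_layout_to_drawing {V : Type} [Fintype V] (G : SimpleGraph V)
    (k n' : ℕ) :
    (∀ L : ImproperTrackLayout V G k,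
      (∀ i : Fin k, {v : V | L.track v = i}.ncard ≤ n') →
      ∃ D : Drawing3D V G, D.InBox k (2 * k) (2 * k * n')) ∧
    (∀ L : TrackLayout V G k,
      (∀ i : Fin k, {v : V | L.track v = i}.ncard ≤ n') →
      ∃ D : Drawing3D V G, D.InBox k (2 * k) (2 * k * n')) := by
  have main : ∀ L : ImproperTrackLayout V G k,
      (∀ i : Fin k, {v : V | L.track v = i}.ncard ≤ n') →
      ∃ D : Drawing3D V G, D.InBox k (2 * k) (2 * k * n') := by
    intro L hL
    rcases Nat.eq_zero_or_pos k with hk0 | hk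
    · subst hk0
      haveI : IsEmpty V := ⟨fun v => (L.track v).elim0⟩
      exact ⟨⟨fun v => isEmptyElim v, fun a b _ => Subsingleton.elim a b,
        fun v => isEmptyElim v, fun v => isEmptyElim v⟩, 0, fun v => isEmptyElim v⟩
    · exact improper_drawing G hk L hL
  exact ⟨main, fun L hL => main
    ⟨L.track, L.pos, L.inj, fun v w x h ht _ _ _ => absurd ht (L.proper v w h), L.noX⟩ hL⟩
end
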